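/- arXiv:1908.06448 — 12 statements merged into one kernel-verified Lean document; each statement's English description precedes it below -/
import Mathlib

section
/- Let S be a numerical semigroup with e(S) = m(S) − 1. Then S is Apéry half-factorial: every element of Ap(S) has all its factorizations into atoms of the same length. -/
/-- A numerical semigroup: a cofinite additive submonoid of ℕ. -/
def IsNumericalSemigroup (S : Set ℕ) : Prop :=
  0 ∈ S ∧ (∀ a ∈ S, ∀ b ∈ S, a + b ∈ S) ∧ (Sᶜ : Set ℕ).Finite

/-- The multiplicity: the smallest nonzero element. -/
noncomputable def mult (S : Set ℕ) : ℕ := sInf {n | n ∈ S ∧ n ≠ 0}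

/-- The Apéry set of `S` with respect to `m`: elements `x ∈ S` with `x - m ∉ S`. -/
def Apery (S : Set ℕ) (m : ℕ) : Set ℕ :=
  {x | x ∈ S ∧ ¬∃ y ∈ S, x = y + m}

/-- The atoms of `S`: nonzero elements not a sum of two nonzero elements of `S`. -/
def Atoms (S : Set ℕ) : Set ℕ :=
  {x | x ∈ S ∧ x ≠ 0 ∧ ¬∃ a ∈ S, ∃ b ∈ S, a ≠ 0 ∧ b ≠ 0 ∧ x = a + b}

/-- The set of factorization lengths of `n` over the atom set `A`. -/
def FactLens (A : Set ℕ) (n : ℕ) : Set ℕ :=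
  {L | ∃ c : ℕ →₀ ℕ, (↑c.support : Set ℕ) ⊆ A ∧
    c.sum (fun x k => k * x) = n ∧ c.sum (fun _ k => k) = L}

/-- `n` is half-factorial: all factorization lengths agree. -/
def HalfFactorial (A : Set ℕ) (n : ℕ) : Prop :=
  ∀ L₁ ∈ FactLens A n, ∀ L₂ ∈ FactLens A n, L₁ = L₂

/-- Elasticity: max factorization length over min, with `ρ(0) = 1`. -/
noncomputable def elasticity (A : Set ℕ) (n : ℕ) : ℚ :=
  if n = 0 then 1 else ((sSup (FactLens A n) : ℕ) : ℚ) / ((sInf (FactLens A n) : ℕ) : ℚ)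

/-!
Write `m = m(S)` and `N = Ap(S) \ ({0} ∪ Atoms S)`. Since the residues mod `m` separate the Apéry
set, `|Ap(S)| ≤ m`; and `Ap(S)` contains `0`, the `e(S) - 1` atoms other than `m`, and `N`.
Hence `e(S) + |N| ≤ m`, so `e(S) = m - 1` leaves room for at most one element in `N`.
A factorization of an Apéry element `n` has length `0` if `n = 0` and `1` if `n` is an atom.
Otherwise it has length `2`: if `n = a + b + t` with atoms `a, b` and `t ≠ 0`, then `a + b`
is again in `N` (summands of Apéry elements are Apéry elements) and smaller than `n`.
-/

lemma exists_multiset_of_mem_factLens {A : Set ℕ} {n L : ℕ} (h : L ∈ FactLens A n) :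
    ∃ l : Multiset ℕ, (∀ a ∈ l, a ∈ A) ∧ l.sum = n ∧ Multiset.card l = L := by
  obtain ⟨c, hc, rfl, rfl⟩ := h
  refine ⟨Finsupp.toMultiset c, fun a ha => hc ((Finsupp.mem_toMultiset c a).1 ha), ?_,
    Finsupp.card_toMultiset c⟩
  simp only [Finsupp.sum_toMultiset, smul_eq_mul]

lemma halfFactorial_of_factLens_subset {A : Set ℕ} {n k : ℕ} (h : FactLens A n ⊆ {k}) :
    HalfFactorial A n :=
  fun _ h₁ _ h₂ => (h h₁).trans (h h₂).symm

lemma card_le_sum_of_forall_mem_atoms {S : Set ℕ} {l : Multiset ℕ}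
    (hl : ∀ a ∈ l, a ∈ Atoms S) : Multiset.card l ≤ l.sum := by
  simpa using Multiset.card_nsmul_le_sum fun a ha => Nat.one_le_iff_ne_zero.2 (hl a ha).2.1

lemma factLens_zero_subset (S : Set ℕ) : FactLens (Atoms S) 0 ⊆ {0} := by
  intro L hL
  obtain ⟨l, hl, hsum, rfl⟩ := exists_multiset_of_mem_factLens hL
  have := card_le_sum_of_forall_mem_atoms hl
  simp only [Set.mem_singleton_iff]
  omega

lemma mult_mem_atoms {S : Set ℕ} (h : ∃ n ∈ S, 0 < n) : mult S ∈ Atoms S := by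
  obtain ⟨n, hn, hn0⟩ := h
  have hmem : mult S ∈ {n | n ∈ S ∧ n ≠ 0} := Nat.sInf_mem ⟨n, hn, hn0.ne'⟩
  have hle : ∀ a ∈ S, a ≠ 0 → mult S ≤ a := fun a ha ha0 => Nat.sInf_le ⟨ha, ha0⟩
  refine ⟨hmem.1, hmem.2, ?_⟩
  rintro ⟨a, ha, b, hb, ha0, hb0, hab⟩
  have := hle a ha ha0
  have := hle b hb hb0
  omega

lemma IsNumericalSemigroup.exists_pos_mem {S : Set ℕ} (hS : IsNumericalSemigroup S) :
    ∃ n ∈ S, 0 < n :=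
  (by simpa using hS.2.2.infinite_compl : S.Infinite).exists_gt 0

section AddSubmonoid

variable (M : AddSubmonoid ℕ) {m : ℕ}

lemma zero_mem_apery (hm0 : m ≠ 0) : 0 ∈ Apery M m :=
  ⟨M.zero_mem, fun ⟨y, _, hy⟩ => hm0 (by omega)⟩

variable {M}

lemma mem_apery_of_add_mem_apery {x y : ℕ} (hx : x ∈ M) (hy : y ∈ M)
    (hxy : x + y ∈ Apery M m) : x ∈ Apery M m :=
  ⟨hx, fun ⟨z, hz, hxz⟩ => hxy.2 ⟨z + y, M.add_mem hz hy, by omega⟩⟩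

lemma atoms_diff_singleton_subset_apery (hm : m ∈ M) (hm0 : m ≠ 0) :
    Atoms M \ {m} ⊆ Apery M m := by
  rintro a ⟨⟨haM, -, hna⟩, ham⟩
  refine ⟨haM, ?_⟩
  rintro ⟨y, hy, rfl⟩
  have hy0 : y ≠ 0 := by rintro rfl; simp at ham
  exact hna ⟨y, hy, m, hm, hy0, hm0, rfl⟩

lemma injOn_mod_apery (hm : m ∈ M) : Set.InjOn (· % m) (Apery M m) := by
  intro x hx y hy hxy
  wlog hle : x ≤ y generalizing x y
  · exact (this hy hx hxy.symm (le_of_not_ge hle)).symm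
  obtain ⟨k, hk⟩ := (Nat.modEq_iff_dvd' hle).1 hxy
  cases k with
  | zero => omega
  | succ k =>
    rw [Nat.mul_succ] at hk
    exact absurd ⟨x + m * k, M.add_mem hx.1 (by simpa [mul_comm] using M.nsmul_mem hm k),
      by omega⟩ hy.2

lemma apery_finite (hm : m ∈ M) (hm0 : m ≠ 0) : (Apery M m).Finite :=
  Set.Finite.of_finite_image ((Set.finite_Iio m).subset (by
    rintro _ ⟨x, -, rfl⟩; exact Nat.mod_lt x (Nat.pos_of_ne_zero hm0))) (injOn_mod_apery hm)

lemma ncard_apery_le (hm : m ∈ M) (hm0 : m ≠ 0) : (Apery M m).ncard ≤ m := by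
  rw [← (injOn_mod_apery hm).ncard_image]
  calc ((· % m) '' Apery M m).ncard ≤ (Set.Iio m).ncard :=
        Set.ncard_le_ncard (by rintro _ ⟨x, -, rfl⟩; exact Nat.mod_lt x (Nat.pos_of_ne_zero hm0))
    _ = m := Set.ncard_Iio_nat m

lemma atoms_finite (hm : m ∈ M) (hm0 : m ≠ 0) : (Atoms M).Finite :=
  ((apery_finite hm hm0).insert m).subset fun a ha =>
    (eq_or_ne a m).imp id fun ham => atoms_diff_singleton_subset_apery hm hm0 ⟨ha, ham⟩

lemma ncard_atoms_add_ncard_le (hm : m ∈ Atoms M) :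
    (Atoms M).ncard + (Apery M m \ insert 0 (Atoms M)).ncard ≤ m := by
  have hmM : m ∈ M := hm.1
  have hm0 : m ≠ 0 := hm.2.1
  -- exchanging the atom `m` for `0` gives a subset of `Ap(S)` of the same size
  rw [← Set.ncard_exchange (fun h0 => h0.2.1 rfl) hm,
    ← Set.ncard_union_eq ?disj (((atoms_finite hmM hm0).sdiff).insert 0)
      ((apery_finite hmM hm0).sdiff)]
  case disj =>
    refine Set.disjoint_left.2 fun x hx hx' => hx'.2 ?_
    rcases hx with rfl | hx
    exacts [Set.mem_insert 0 _, Set.mem_insert_of_mem 0 hx.1]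
  refine (Set.ncard_le_ncard ?_ (apery_finite hmM hm0)).trans (ncard_apery_le hmM hm0)
  exact Set.union_subset (Set.insert_subset (zero_mem_apery M hm0)
    (atoms_diff_singleton_subset_apery hmM hm0)) Set.sdiff_subset

lemma subsingleton_apery_diff_of_ncard_atoms_eq (hm : m ∈ Atoms M)
    (h : (Atoms M).ncard = m - 1) : (Apery M m \ insert 0 (Atoms M)).Subsingleton := by
  have hpos : 0 < (Atoms M).ncard := (Set.ncard_pos (atoms_finite hm.1 hm.2.1)).2 ⟨m, hm⟩
  have := ncard_atoms_add_ncard_le hm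
  intro x hx y hy
  exact (Set.ncard_le_one (apery_finite hm.1 hm.2.1).sdiff).1 (by omega) x hx y hy

lemma factLens_subset_of_mem_atoms {n : ℕ} (hn : n ∈ Atoms M) : FactLens (Atoms M) n ⊆ {1} := by
  intro L hL
  obtain ⟨l, hl, hsum, rfl⟩ := exists_multiset_of_mem_factLens hL
  rcases hl₀ : Multiset.card l with _ | _ | k
  · rw [Multiset.card_eq_zero.1 hl₀, Multiset.sum_zero] at hsum
    exact absurd hsum.symm hn.2.1
  · rfl
  obtain ⟨a, t, rfl, ht⟩ := Multiset.card_eq_succ_iff.1 hl₀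
  have ha := hl a (Multiset.mem_cons_self a t)
  have htl : ∀ b ∈ t, b ∈ Atoms M := fun b hb => hl b (Multiset.mem_cons_of_mem hb)
  have := card_le_sum_of_forall_mem_atoms htl
  rw [Multiset.sum_cons] at hsum
  exact absurd ⟨a, ha.1, t.sum, M.multiset_sum_mem t fun b hb => (htl b hb).1, ha.2.1,
    by omega, hsum.symm⟩ hn.2.2

lemma factLens_subset_of_mem_apery_diff {n : ℕ}
    (hN : (Apery M m \ insert 0 (Atoms M)).Subsingleton)
    (hn : n ∈ Apery M m \ insert 0 (Atoms M)) : FactLens (Atoms M) n ⊆ {2} := by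
  intro L hL
  obtain ⟨l, hl, hsum, rfl⟩ := exists_multiset_of_mem_factLens hL
  have hn0 : n ≠ 0 := fun h => hn.2 (Or.inl h)
  have hnA : n ∉ Atoms M := fun h => hn.2 (Or.inr h)
  rcases hl₀ : Multiset.card l with _ | _ | _ | k
  · rw [Multiset.card_eq_zero.1 hl₀, Multiset.sum_zero] at hsum
    exact absurd hsum.symm hn0
  · obtain ⟨a, rfl⟩ := Multiset.card_eq_one.1 hl₀
    rw [Multiset.sum_singleton] at hsum
    exact absurd (hsum ▸ hl a (Multiset.mem_singleton_self a)) hnA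
  · rfl
  obtain ⟨a, s, rfl, hs⟩ := Multiset.card_eq_succ_iff.1 hl₀
  obtain ⟨b, t, rfl, ht⟩ := Multiset.card_eq_succ_iff.1 hs
  have ha := hl a (by simp)
  have hb := hl b (by simp)
  have htl : ∀ c ∈ t, c ∈ Atoms M := fun c hc => hl c (by simp [hc])
  have := card_le_sum_of_forall_mem_atoms htl
  simp only [Multiset.sum_cons] at hsum
  have hab : a + b ∈ Apery M m \ insert 0 (Atoms M) := by
    refine ⟨mem_apery_of_add_mem_apery (M.add_mem ha.1 hb.1)
      (M.multiset_sum_mem t fun c hc => (htl c hc).1) (by rw [add_assoc, hsum]; exact hn.1), ?_⟩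
    rintro (h0 | ⟨-, -, hna⟩)
    exacts [ha.2.1 (by omega), hna ⟨a, ha.1, b, hb.1, ha.2.1, hb.2.1, rfl⟩]
  have := hN hab hn
  omega

end AddSubmonoid

theorem AHF_of_embdim_eq_mult_sub_one_general (S : Set ℕ)
    (hS : IsNumericalSemigroup S) (h : (Atoms S).ncard = mult S - 1) :
    ∀ n ∈ Apery S (mult S), HalfFactorial (Atoms S) n := by
  have hm : mult S ∈ Atoms S := mult_mem_atoms hS.exists_pos_mem
  obtain ⟨M, rfl⟩ : ∃ M : AddSubmonoid ℕ, (M : Set ℕ) = S :=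
    ⟨{ carrier := S, add_mem' := fun ha hb => hS.2.1 _ ha _ hb, zero_mem' := hS.1 }, rfl⟩
  have hN := subsingleton_apery_diff_of_ncard_atoms_eq hm h
  intro n hn
  by_cases hn0 : n = 0
  · exact halfFactorial_of_factLens_subset (hn0 ▸ factLens_zero_subset M)
  by_cases hnA : n ∈ Atoms M
  · exact halfFactorial_of_factLens_subset (factLens_subset_of_mem_atoms hnA)
  · exact halfFactorial_of_factLens_subset
      (factLens_subset_of_mem_apery_diff hN ⟨hn, by rintro (h0 | hA) <;> contradiction⟩)

theorem AHF_of_embdim_eq_mult_sub_one (S : Set ℕ)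
    (hS : IsNumericalSemigroup S) (h : (Atoms S).ncard = mult S - 1)
    (hm : 2 ≤ mult S) :
    ∀ n ∈ Apery S (mult S), HalfFactorial (Atoms S) n :=
  AHF_of_embdim_eq_mult_sub_one_general S hS h
end

section
/- In the numerical semigroup S = ⟨5, 6, 9⟩, the element 18 lies in Ap(S) and has elasticity 3/2; in particular S is not Apéry half-factorial. -/
/-- The numerical semigroup generated by three elements. -/
def Gen3 (g₁ g₂ g₃ : ℕ) : Set ℕ := {x | ∃ a b c : ℕ, x = a * g₁ + b * g₂ + c * g₃}

/-- Factorization lengths of `n` over the atoms `g₁, g₂, g₃`. -/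
def FactLens3 (g₁ g₂ g₃ n : ℕ) : Set ℕ :=
  {L | ∃ a b c : ℕ, n = a * g₁ + b * g₂ + c * g₃ ∧ L = a + b + c}

/-- `n` is half-factorial over `g₁, g₂, g₃`. -/
def HF3 (g₁ g₂ g₃ n : ℕ) : Prop :=
  ∀ L₁ ∈ FactLens3 g₁ g₂ g₃ n, ∀ L₂ ∈ FactLens3 g₁ g₂ g₃ n, L₁ = L₂

/-- Elasticity over `g₁, g₂, g₃`, with `ρ(0) = 1`. -/
noncomputable def elasticity3 (g₁ g₂ g₃ n : ℕ) : ℚ :=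
  if n = 0 then 1
  else ((sSup (FactLens3 g₁ g₂ g₃ n) : ℕ) : ℚ) / ((sInf (FactLens3 g₁ g₂ g₃ n) : ℕ) : ℚ)

lemma mem_apery18 : 18 ∈ Apery (Gen3 5 6 9) 5 := by
  constructor
  · exact ⟨0, 3, 0, by norm_num⟩
  · rintro ⟨y, ⟨a, b, c, hy⟩, h⟩
    omega

lemma factlens_eq : FactLens3 5 6 9 18 = {2, 3} := by
  ext L
  constructor
  · rintro ⟨a, b, c, h1, h2⟩
    simp only [Set.mem_insert_iff, Set.mem_singleton_iff]
    omega
  · rintro (rfl | rfl)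
    · exact ⟨0, 0, 2, by norm_num⟩
    · exact ⟨0, 3, 0, by norm_num⟩

theorem not_AHF_569 :
    18 ∈ Apery (Gen3 5 6 9) 5 ∧ elasticity3 5 6 9 18 = 3 / 2 ∧
    ∃ n ∈ Apery (Gen3 5 6 9) 5, ¬ HF3 5 6 9 n := by
  refine ⟨mem_apery18, ?_, 18, mem_apery18, ?_⟩
  · rw [elasticity3, if_neg (by norm_num), factlens_eq]
    have hs : sSup ({2, 3} : Set ℕ) = 3 :=
      IsGreatest.csSup_eq ⟨by simp, by rintro x (rfl | rfl) <;> norm_num⟩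
    have hi : sInf ({2, 3} : Set ℕ) = 2 :=
      IsLeast.csInf_eq ⟨by simp, by rintro x (rfl | rfl) <;> norm_num⟩
    rw [hs, hi]; norm_num
  · intro h
    have := h 2 (by rw [factlens_eq]; simp) 3 (by rw [factlens_eq]; simp)
    norm_num at this
end

section
/- Fix coprime integers a > b ≥ 1 and a prime p with p ∤ (a + b) and a + b < pb. Let S = ⟨a + b, pa, pb⟩. Then Ap(S) = {0, pb, 2pb, …, (a−1)pb, pa, 2pa, …, (b−1)pa, pab}. -/
/-- Candidate minimal elements in each residue class. -/
def Wfun (a b p j : ℕ) : ℕ := if j ≤ a then j * (p * b) else (a + b - j) * (p * a)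

lemma wfun_rep (a b p : ℕ) (hb : 1 ≤ b) :
    ∀ i j : ℕ, ∃ j0 c : ℕ, j0 < a + b ∧
      i * (p * a) + j * (p * b) = Wfun a b p j0 + c * (a + b) := by
  have hm : 0 < a + b := by omega
  intro i
  induction i with
  | zero =>
      intro j
      have hj : (a + b) * (j / (a + b)) + j % (a + b) = j := Nat.div_add_mod j (a + b)
      set q := j / (a + b) with hq
      set r := j % (a + b) with hrdef
      have hr : r < a + b := Nat.mod_lt _ hm
      by_cases hra : r ≤ a
      · refine ⟨r, q * (p * b), hr, ?_⟩
        simp only [Wfun, if_pos hra]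
        rw [← hj]; ring
      · refine ⟨r, p * (r - a) + q * (p * b), hr, ?_⟩
        simp only [Wfun, if_neg hra]
        rw [← hj]
        zify [le_of_not_ge hra, le_of_lt hr]
        ring
  | succ i ih =>
      intro j
      cases j with
      | succ j' =>
          obtain ⟨j0, c, hj0, heq⟩ := ih j'
          refine ⟨j0, c + p, hj0, ?_⟩
          zify at heq ⊢
          linear_combination heq
      | zero =>
          have hi : (a + b) * ((i+1) / (a + b)) + (i+1) % (a + b) = i+1 :=
            Nat.div_add_mod _ _
          set q := (i+1) / (a + b)
          set r := (i+1) % (a + b)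
          have hr : r < a + b := Nat.mod_lt _ hm
          rcases Nat.lt_or_ge r (b+1) with hrb | hrb
          · rcases Nat.eq_zero_or_pos r with hr0 | hr1
            · refine ⟨0, q * (p * a), hm, ?_⟩
              simp only [Wfun, if_pos (Nat.zero_le a)]
              rw [← hi, hr0]; ring
            · rcases Nat.lt_or_ge r b with hrb' | hrb''
              · refine ⟨a + b - r, q * (p * a), by omega, ?_⟩
                have hne : ¬ (a + b - r ≤ a) := by omega
                simp only [Wfun, if_neg hne]
                have h2 : a + b - (a + b - r) = r := by omega
                rw [h2, ← hi]; ring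
              · have hreq : r = b := by omega
                refine ⟨a, q * (p * a), by omega, ?_⟩
                simp only [Wfun, if_pos (le_refl a)]
                rw [← hi, hreq]; ring
          · refine ⟨a + b - r, p * (r - b) + q * (p * a), by omega, ?_⟩
            have hle : a + b - r ≤ a := by omega
            simp only [Wfun, if_pos hle]
            rw [← hi]
            zify [show b ≤ r by omega, le_of_lt hr]
            ring

lemma wfun_mem (a b p j : ℕ) : Wfun a b p j ∈ Gen3 (a+b) (p*a) (p*b) := by
  by_cases h : j ≤ a
  · exact ⟨0, 0, j, by simp [Wfun, h]⟩
  · exact ⟨0, a + b - j, 0, by simp [Wfun, h]⟩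

lemma wfun_add_mem (a b p j k : ℕ) :
    Wfun a b p j + k * (a+b) ∈ Gen3 (a+b) (p*a) (p*b) := by
  by_cases h : j ≤ a
  · exact ⟨k, 0, j, by simp only [Wfun, if_pos h]; ring⟩
  · exact ⟨k, a + b - j, 0, by simp only [Wfun, if_neg h]; ring⟩

lemma wfun_pb (a b p j : ℕ) (hj : j ≤ a + b) :
    ∃ d, j * (p * b) = Wfun a b p j + d * (a + b) := by
  by_cases h : j ≤ a
  · exact ⟨0, by simp [Wfun, h]⟩
  · refine ⟨p * (j - a), ?_⟩
    simp only [Wfun, if_neg h]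
    zify [show a ≤ j by omega, hj]
    ring

lemma mem_S_rep (a b p x : ℕ) (hb : 1 ≤ b)
    (hx : x ∈ Gen3 (a+b) (p*a) (p*b)) :
    ∃ j0 c : ℕ, j0 < a + b ∧ x = Wfun a b p j0 + c * (a + b) := by
  obtain ⟨α, β, γ, rfl⟩ := hx
  obtain ⟨j0, c, hj0, heq⟩ := wfun_rep a b p hb β γ
  refine ⟨j0, c + α, hj0, ?_⟩
  zify at heq ⊢
  linear_combination heq

lemma wfun_unique (a b p : ℕ) (hb : 1 ≤ b)
    (hcop : Nat.Coprime a b) (hp : p.Prime) (hpd : ¬ p ∣ (a + b)) :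
    ∀ j0 j1 c0 c1 : ℕ, j0 < a + b → j1 < a + b →
      Wfun a b p j0 + c0 * (a + b) = Wfun a b p j1 + c1 * (a + b) →
      j0 = j1 ∧ c0 = c1 := by
  intro j0 j1 c0 c1 h0 h1 heq
  obtain ⟨d0, hd0⟩ := wfun_pb a b p j0 (le_of_lt h0)
  obtain ⟨d1, hd1⟩ := wfun_pb a b p j1 (le_of_lt h1)
  have key : j0 * (p * b) + (c0 + d1) * (a + b) = j1 * (p * b) + (c1 + d0) * (a + b) := by
    zify at hd0 hd1 heq ⊢
    linear_combination hd0 - hd1 + heq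
  have hmod : j0 * (p * b) ≡ j1 * (p * b) [MOD a + b] := by
    show _ % _ = _ % _
    rw [← Nat.add_mul_mod_self_right (j0*(p*b)) (c0+d1) (a+b),
        ← Nat.add_mul_mod_self_right (j1*(p*b)) (c1+d0) (a+b), key]
  have hcp : Nat.gcd (a+b) (p*b) = 1 := by
    have h1' : Nat.Coprime (a+b) p := ((hp.coprime_iff_not_dvd).mpr hpd).symm
    have h2' : Nat.Coprime (a+b) b := by
      have : Nat.Coprime b (a+b) := by simpa using hcop.symm
      exact this.symm
    exact Nat.Coprime.mul_right h1' h2'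
  have hjj : j0 ≡ j1 [MOD a+b] := Nat.ModEq.cancel_right_of_coprime hcp hmod
  have hj : j0 = j1 := by
    have h := hjj
    rwa [Nat.ModEq, Nat.mod_eq_of_lt h0, Nat.mod_eq_of_lt h1] at h
  subst hj
  refine ⟨rfl, ?_⟩
  have h2 : c0 * (a+b) = c1 * (a+b) := by omega
  exact Nat.eq_of_mul_eq_mul_right (by omega) h2

lemma wfun_apery (a b p : ℕ) (hb : 1 ≤ b)
    (hcop : Nat.Coprime a b) (hp : p.Prime) (hpd : ¬ p ∣ (a + b))
    (j0 : ℕ) (hj0 : j0 < a + b) :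
    Wfun a b p j0 ∈ Apery (Gen3 (a+b) (p*a) (p*b)) (a+b) := by
  refine ⟨wfun_mem a b p j0, ?_⟩
  rintro ⟨y, hy, heq⟩
  obtain ⟨j1, c, hj1, rfl⟩ := mem_S_rep a b p y hb hy
  have h2 : Wfun a b p j0 + 0 * (a + b) = Wfun a b p j1 + (c+1) * (a + b) := by
    zify at heq ⊢
    linear_combination heq
  obtain ⟨-, hc⟩ := wfun_unique a b p hb hcop hp hpd j0 j1 0 (c+1) hj0 hj1 h2
  omega

theorem apery_master_example (a b p : ℕ) (hb : 1 ≤ b) (hab : b < a)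
    (hcop : Nat.Coprime a b) (hp : p.Prime) (hpd : ¬ p ∣ (a + b))
    (hlt : a + b < p * b) :
    Apery (Gen3 (a + b) (p * a) (p * b)) (a + b) =
      {0} ∪ {x | ∃ k, 1 ≤ k ∧ k ≤ a - 1 ∧ x = k * (p * b)}
          ∪ {x | ∃ k, 1 ≤ k ∧ k ≤ b - 1 ∧ x = k * (p * a)}
          ∪ {p * a * b} := by
  have hm : 0 < a + b := by omega
  ext x
  constructor
  · intro hx
    obtain ⟨hxS, hnot⟩ := hx
    obtain ⟨j0, c, hj0, rfl⟩ := mem_S_rep a b p x hb hxS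
    rcases c with _ | c'
    · simp only [Nat.zero_mul, Nat.add_zero]
      simp only [Set.mem_union, Set.mem_singleton_iff, Set.mem_setOf_eq]
      rcases Nat.eq_zero_or_pos j0 with rfl | hpos
      · exact Or.inl (Or.inl (Or.inl (by simp [Wfun])))
      · rcases lt_trichotomy j0 a with hlt' | heq' | hgt'
        · exact Or.inl (Or.inl (Or.inr ⟨j0, hpos, by omega,
            by simp [Wfun, le_of_lt hlt']⟩))
        · subst heq'
          exact Or.inr (by simp only [Wfun, if_pos (le_refl j0)]; ring)
        · exact Or.inl (Or.inr ⟨a + b - j0, by omega, by omega,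
            by simp only [Wfun, if_neg (by omega : ¬ j0 ≤ a)]⟩)
    · exact absurd ⟨Wfun a b p j0 + c' * (a+b), wfun_add_mem a b p j0 c', by ring⟩ hnot
  · intro hx
    simp only [Set.mem_union, Set.mem_singleton_iff, Set.mem_setOf_eq] at hx
    rcases hx with ((rfl | ⟨k, hk1, hk2, rfl⟩) | ⟨k, hk1, hk2, rfl⟩) | rfl
    · simpa [Wfun] using wfun_apery a b p hb hcop hp hpd 0 hm
    · have h := wfun_apery a b p hb hcop hp hpd k (by omega)
      simpa [Wfun, show k ≤ a by omega] using h
    · have h := wfun_apery a b p hb hcop hp hpd (a + b - k) (by omega)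
      simpa [Wfun, show ¬ (a + b - k ≤ a) by omega,
        show a + b - (a + b - k) = k by omega] using h
    · have e : p * a * b = Wfun a b p a := by
        simp only [Wfun, if_pos (le_refl a)]; ring
      rw [e]
      exact wfun_apery a b p hb hcop hp hpd a (by omega)
end

section
/- Fix coprime integers a > b ≥ 1 and a prime p with p ∤ (a + b) and a + b < pb, and let S = ⟨a + b, pa, pb⟩. Then the element pab ∈ Ap(S) has elasticity a/b, and every other element of Ap(S) has a unique factorization into atoms. In particular, the set of elasticities of elements of Ap(S) equals {1, a/b}. -/
/-- In an Apéry element, no factorization uses the first generator. -/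
lemma apery_c1_zero {a b p x c1 c2 c3 : ℕ}
    (hx : x ∈ Apery (Gen3 (a + b) (p * a) (p * b)) (a + b))
    (h : x = c1 * (a + b) + c2 * (p * a) + c3 * (p * b)) : c1 = 0 := by
  by_contra hc
  obtain ⟨c1', rfl⟩ : ∃ c1', c1 = c1' + 1 := ⟨c1 - 1, by omega⟩
  exact hx.2 ⟨c1' * (a + b) + c2 * (p * a) + c3 * (p * b), ⟨c1', c2, c3, rfl⟩,
    by rw [h]; ring⟩

/-- An Apéry element cannot have a factorization using both `p*a` and `p*b`. -/
lemma apery_not_both {a b p x c2 c3 : ℕ} (hp1 : 1 ≤ p)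
    (hx : x ∈ Apery (Gen3 (a + b) (p * a) (p * b)) (a + b))
    (h : x = c2 * (p * a) + c3 * (p * b)) (h2 : 1 ≤ c2) (h3 : 1 ≤ c3) : False := by
  obtain ⟨p', rfl⟩ : ∃ p', p = p' + 1 := ⟨p - 1, by omega⟩
  obtain ⟨c2', rfl⟩ : ∃ c2', c2 = c2' + 1 := ⟨c2 - 1, by omega⟩
  obtain ⟨c3', rfl⟩ : ∃ c3', c3 = c3' + 1 := ⟨c3 - 1, by omega⟩
  exact hx.2 ⟨p' * (a + b) + c2' * ((p' + 1) * a) + c3' * ((p' + 1) * b),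
    ⟨p', c2', c3', rfl⟩, by rw [h]; ring⟩

/-- `p*a*b` is in the Apéry set. -/
lemma pab_mem_apery {a b p : ℕ} (hb : 1 ≤ b) (hab : b < a)
    (hcop : Nat.Coprime a b) (hp : p.Prime) (hpd : ¬ p ∣ (a + b)) :
    p * a * b ∈ Apery (Gen3 (a + b) (p * a) (p * b)) (a + b) := by
  constructor
  · exact ⟨0, b, 0, by ring⟩
  · rintro ⟨y, ⟨c1, c2, c3, rfl⟩, hy⟩
    have h' : p * a * b = (c2 * (p * a) + c3 * (p * b)) + (c1 + 1) * (a + b) := by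
      rw [hy]; ring
    have hd1 : p ∣ p * a * b := Dvd.dvd.mul_right (dvd_mul_right p a) b
    have hd2 : p ∣ c2 * (p * a) + c3 * (p * b) :=
      dvd_add ⟨c2 * a, by ring⟩ ⟨c3 * b, by ring⟩
    have hd3 : p ∣ (c1 + 1) * (a + b) := (Nat.dvd_add_right hd2).mp (h' ▸ hd1)
    rcases (Nat.Prime.dvd_mul hp).mp hd3 with hd4 | hd4
    swap
    · exact hpd hd4
    obtain ⟨t, ht⟩ := hd4
    have ht1 : 1 ≤ t := by
      rcases Nat.eq_zero_or_pos t with h0 | h0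
      · rw [h0, Nat.mul_zero] at ht; omega
      · exact h0
    have h'' : p * (a * b) = p * (t * (a + b) + (c2 * a + c3 * b)) := by
      rw [show p * (a * b) = p * a * b from by ring, h', ht]; ring
    have h3 : a * b = t * (a + b) + (c2 * a + c3 * b) :=
      Nat.eq_of_mul_eq_mul_left hp.pos h''
    -- set u = t + c2, v = t + c3
    have huv : a * b = (t + c2) * a + (t + c3) * b := by rw [h3]; ring
    set u := t + c2 with hu
    set v := t + c3 with hv
    have hub : u < b := by
      have hvb : b ≤ v * b := Nat.le_mul_of_pos_left b (by omega)
      have : u * a < b * a := by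
        have : a * b = u * a + v * b := huv
        nlinarith
      exact Nat.lt_of_mul_lt_mul_right this
    obtain ⟨w, hw⟩ : ∃ w, b = u + w := ⟨b - u, by omega⟩
    have haw : a * w = v * b := by
      have h4 : u * a + a * w = u * a + v * b := by
        calc u * a + a * w = a * (u + w) := by ring
        _ = a * b := by rw [hw]
        _ = u * a + v * b := huv
      exact Nat.add_left_cancel h4
    have hbw : b ∣ w := by
      have : b ∣ w * a := ⟨v, by rw [mul_comm w a, haw, mul_comm v b]⟩
      exact (Nat.Coprime.dvd_of_dvd_mul_right hcop.symm this)
    have hw1 : 1 ≤ w := by omega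
    have := Nat.le_of_dvd (by omega) hbw
    omega

/-- Asymmetric helper: no second factorization with strictly larger `pa`-coefficient. -/
lemma uniq_aux {a b p x c2 c3 d2 d3 : ℕ} (hb : 1 ≤ b) (hab : b < a)
    (hcop : Nat.Coprime a b) (hp : p.Prime)
    (hx : x ∈ Apery (Gen3 (a + b) (p * a) (p * b)) (a + b)) (hne : x ≠ p * a * b)
    (h1 : x = c2 * (p * a) + c3 * (p * b)) (h2 : x = d2 * (p * a) + d3 * (p * b))
    (hlt2 : d2 < c2) : False := by
  have heq : c2 * a + c3 * b = d2 * a + d3 * b := by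
    apply Nat.eq_of_mul_eq_mul_left hp.pos
    rw [show p * (c2 * a + c3 * b) = c2 * (p * a) + c3 * (p * b) from by ring, ← h1, h2]
    ring
  obtain ⟨e, rfl⟩ : ∃ e, c2 = d2 + e := ⟨c2 - d2, by omega⟩
  have he1 : 1 ≤ e := by omega
  have heq2 : e * a + c3 * b = d3 * b := by
    have h4 : d2 * a + (e * a + c3 * b) = d2 * a + d3 * b := by
      rw [← heq]; ring
    exact Nat.add_left_cancel h4
  have hc3d3 : c3 ≤ d3 := by
    have : c3 * b ≤ d3 * b := by omega
    exact Nat.le_of_mul_le_mul_right this hb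
  obtain ⟨f, rfl⟩ : ∃ f, d3 = c3 + f := ⟨d3 - c3, by omega⟩
  have hef : e * a = f * b := by
    have h4 : e * a + c3 * b = c3 * b + f * b := by rw [heq2]; ring
    omega
  have hbe : b ∣ e := by
    have : b ∣ e * a := ⟨f, by rw [hef, mul_comm f b]⟩
    exact Nat.Coprime.dvd_of_dvd_mul_right hcop.symm this
  obtain ⟨k, rfl⟩ := hbe
  have hk1 : 1 ≤ k := by
    rcases Nat.eq_zero_or_pos k with h0 | h0
    · rw [h0, Nat.mul_zero] at he1; omega
    · exact h0
  have hfk : f = k * a := by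
    apply Nat.eq_of_mul_eq_mul_right hb
    rw [← hef]; ring
  have hbk : 1 ≤ b * k := Nat.mul_pos hb hk1
  have hf1 : 1 ≤ f := by rw [hfk]; exact Nat.mul_pos hk1 (by omega)
  -- every factorization of an Apéry element has a zero component
  have hc3 : c3 = 0 := by
    by_contra hc
    exact apery_not_both hp.pos hx h1 (by omega) (by omega)
  have hd2 : d2 = 0 := by
    by_contra hd
    exact apery_not_both hp.pos hx h2 (by omega) (by omega)
  subst hc3; subst hd2
  -- so x = (b*k) * (p*a), hence x = k * (p*a*b)
  have hk2 : 2 ≤ k := by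
    by_contra h0
    have hk : k = 1 := by omega
    subst hk
    exact hne (by rw [h1]; ring)
  -- exhibit a mixed factorization, contradiction
  have hmix : x = ((k - 1) * b) * (p * a) + a * (p * b) := by
    obtain ⟨k', rfl⟩ : ∃ k', k = k' + 2 := ⟨k - 2, by omega⟩
    rw [h1]
    have : (k' + 2 - 1) = k' + 1 := by omega
    rw [this]; ring
  exact apery_not_both hp.pos hx hmix (Nat.mul_pos (by omega) hb) (by omega)

/-- Uniqueness of `pa,pb`-factorizations of Apéry elements other than `p*a*b`. -/
lemma uniq23 {a b p x c2 c3 d2 d3 : ℕ} (hb : 1 ≤ b) (hab : b < a)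
    (hcop : Nat.Coprime a b) (hp : p.Prime)
    (hx : x ∈ Apery (Gen3 (a + b) (p * a) (p * b)) (a + b)) (hne : x ≠ p * a * b)
    (h1 : x = c2 * (p * a) + c3 * (p * b)) (h2 : x = d2 * (p * a) + d3 * (p * b)) :
    c2 = d2 ∧ c3 = d3 := by
  rcases lt_trichotomy c2 d2 with h | h | h
  · exact absurd (uniq_aux hb hab hcop hp hx hne h2 h1 h) (by simp)
  · subst h
    refine ⟨rfl, ?_⟩
    apply Nat.eq_of_mul_eq_mul_right hb
    have h4 : c2 * (p * a) + c3 * (p * b) = c2 * (p * a) + d3 * (p * b) := by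
      rw [← h1, h2]
    have h5 : c3 * (p * b) = d3 * (p * b) := Nat.add_left_cancel h4
    apply Nat.eq_of_mul_eq_mul_left hp.pos
    rw [show p * (c3 * b) = c3 * (p * b) from by ring, h5]; ring
  · exact absurd (uniq_aux hb hab hcop hp hx hne h1 h2 h) (by simp)

lemma factlens_pab {a b p : ℕ} (hb : 1 ≤ b) (hab : b < a)
    (hcop : Nat.Coprime a b) (hp : p.Prime) (hpd : ¬ p ∣ (a + b)) :
    FactLens3 (a + b) (p * a) (p * b) (p * a * b) = {b, a} := by
  have hmem := pab_mem_apery hb hab hcop hp hpd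
  have hpa : 0 < p * a := Nat.mul_pos hp.pos (by omega)
  have hpb : 0 < p * b := Nat.mul_pos hp.pos hb
  ext L
  constructor
  · rintro ⟨c1, c2, c3, heq, rfl⟩
    have hc1 : c1 = 0 := apery_c1_zero hmem heq
    subst hc1
    have h1 : p * a * b = c2 * (p * a) + c3 * (p * b) := by rw [heq]; ring
    have hzero : c2 = 0 ∨ c3 = 0 := by
      by_contra hcon
      push_neg at hcon
      exact apery_not_both hp.pos hmem h1 (by omega) (by omega)
    rcases hzero with h0 | h0
    · subst h0
      have : c3 * (p * b) = a * (p * b) := by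
        rw [show a * (p * b) = p * a * b from by ring, h1]; ring
      have : c3 = a := Nat.eq_of_mul_eq_mul_right hpb this
      right; simp; omega
    · subst h0
      have : c2 * (p * a) = b * (p * a) := by
        rw [show b * (p * a) = p * a * b from by ring, h1]; ring
      have : c2 = b := Nat.eq_of_mul_eq_mul_right hpa this
      left; omega
  · rintro (h | h)
    · exact ⟨0, b, 0, by ring, by omega⟩
    · exact ⟨0, 0, a, by ring, by simp at h; omega⟩

lemma elasticity_pab {a b p : ℕ} (hb : 1 ≤ b) (hab : b < a)
    (hcop : Nat.Coprime a b) (hp : p.Prime) (hpd : ¬ p ∣ (a + b)) :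
    elasticity3 (a + b) (p * a) (p * b) (p * a * b) = (a : ℚ) / b := by
  have hne : p * a * b ≠ 0 := by
    have := Nat.mul_pos (Nat.mul_pos hp.pos (show 0 < a by omega)) hb
    omega
  rw [elasticity3, if_neg hne, factlens_pab hb hab hcop hp hpd, csSup_pair, csInf_pair,
    sup_eq_right.mpr hab.le, inf_eq_left.mpr hab.le]

lemma zero_mem_apery_s7 {a b p : ℕ} (hb : 1 ≤ b) :
    0 ∈ Apery (Gen3 (a + b) (p * a) (p * b)) (a + b) := by
  refine ⟨⟨0, 0, 0, by ring⟩, ?_⟩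
  rintro ⟨y, -, hy⟩
  omega

lemma elasticity_other {a b p x : ℕ} (hb : 1 ≤ b) (hab : b < a)
    (hcop : Nat.Coprime a b) (hp : p.Prime)
    (hx : x ∈ Apery (Gen3 (a + b) (p * a) (p * b)) (a + b))
    (hne : x ≠ p * a * b) (h0 : x ≠ 0) :
    elasticity3 (a + b) (p * a) (p * b) x = 1 := by
  obtain ⟨c1, c2, c3, heq⟩ := hx.1
  have hc1 : c1 = 0 := apery_c1_zero hx heq
  subst hc1
  have h1 : x = c2 * (p * a) + c3 * (p * b) := by rw [heq]; ring
  have hFL : FactLens3 (a + b) (p * a) (p * b) x = {c2 + c3} := by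
    ext L
    constructor
    · rintro ⟨d1, d2, d3, hdeq, rfl⟩
      have hd1 : d1 = 0 := apery_c1_zero hx hdeq
      subst hd1
      have h2 : x = d2 * (p * a) + d3 * (p * b) := by rw [hdeq]; ring
      obtain ⟨e2, e3⟩ := uniq23 hb hab hcop hp hx hne h1 h2
      simp; omega
    · rintro rfl
      exact ⟨0, c2, c3, heq, by omega⟩
  have hL : c2 + c3 ≠ 0 := by
    intro hc
    apply h0
    rw [h1]
    have : c2 = 0 ∧ c3 = 0 := by omega
    rw [this.1, this.2]; ring
  rw [elasticity3, if_neg h0, hFL, csSup_singleton, csInf_singleton]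
  rw [div_self]
  exact_mod_cast hL

theorem elasticities_master_example (a b p : ℕ) (hb : 1 ≤ b) (hab : b < a)
    (hcop : Nat.Coprime a b) (hp : p.Prime) (hpd : ¬ p ∣ (a + b))
    (hlt : a + b < p * b) :
    p * a * b ∈ Apery (Gen3 (a + b) (p * a) (p * b)) (a + b) ∧
    elasticity3 (a + b) (p * a) (p * b) (p * a * b) = (a : ℚ) / b ∧
    (∀ x ∈ Apery (Gen3 (a + b) (p * a) (p * b)) (a + b), x ≠ p * a * b →
      ∃! t : ℕ × ℕ × ℕ, x = t.1 * (a + b) + t.2.1 * (p * a) + t.2.2 * (p * b)) ∧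
    {ρ : ℚ | ∃ n ∈ Apery (Gen3 (a + b) (p * a) (p * b)) (a + b),
        elasticity3 (a + b) (p * a) (p * b) n = ρ} = {1, (a : ℚ) / b} := by
  refine ⟨pab_mem_apery hb hab hcop hp hpd, elasticity_pab hb hab hcop hp hpd, ?_, ?_⟩
  · intro x hx hne
    obtain ⟨c1, c2, c3, heq⟩ := hx.1
    have hc1 : c1 = 0 := apery_c1_zero hx heq
    subst hc1
    refine ⟨(0, c2, c3), heq, ?_⟩
    rintro ⟨d1, d2, d3⟩ hd
    simp only at hd
    have hd1 : d1 = 0 := apery_c1_zero hx hd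
    subst hd1
    have h1 : x = c2 * (p * a) + c3 * (p * b) := by rw [heq]; ring
    have h2 : x = d2 * (p * a) + d3 * (p * b) := by rw [hd]; ring
    obtain ⟨e2, e3⟩ := uniq23 hb hab hcop hp hx hne h2 h1
    simp [e2, e3]
  · ext ρ
    simp only [Set.mem_setOf_eq, Set.mem_insert_iff, Set.mem_singleton_iff]
    constructor
    · rintro ⟨n, hn, rfl⟩
      by_cases h0 : n = 0
      · subst h0; left; rw [elasticity3, if_pos rfl]
      by_cases hpe : n = p * a * b
      · subst hpe; right; exact elasticity_pab hb hab hcop hp hpd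
      · left; exact elasticity_other hb hab hcop hp hn hpe h0
    · rintro (rfl | rfl)
      · exact ⟨0, zero_mem_apery_s7 hb, by rw [elasticity3, if_pos rfl]⟩
      · exact ⟨p * a * b, pab_mem_apery hb hab hcop hp hpd,
          elasticity_pab hb hab hcop hp hpd⟩
end

section
/- Let p ≠ 5 be a prime and n ≥ 2 an integer with 2p > 5n. Let S = ⟨5n, 2p, 3p⟩. Then Ap(S) = {0} ∪ {kp : 2 ≤ k ≤ 5n−1} ∪ {(5n+1)p}. -/
lemma mem_gen3_aux (p n x : ℕ) :
    x ∈ Gen3 (5 * n) (2 * p) (3 * p) ↔ ∃ a k, k ≠ 1 ∧ x = a * (5 * n) + k * p := by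
  constructor
  · rintro ⟨a, b, c, rfl⟩
    refine ⟨a, 2 * b + 3 * c, ?_, by ring⟩; omega
  · rintro ⟨a, k, hk, rfl⟩
    obtain ⟨b, hb | hb⟩ : ∃ b, k = 2 * b ∨ k = 2 * b + 3 := by
      rcases Nat.even_or_odd k with ⟨b, hb⟩ | ⟨b, hb⟩
      · exact ⟨b, Or.inl (by omega)⟩
      · exact ⟨b - 1, Or.inr (by omega)⟩
    · exact ⟨a, b, 0, by subst hb; ring⟩
    · exact ⟨a, b, 1, by subst hb; ring⟩

lemma key_aux (p n : ℕ) (hp : p.Prime) (hpm : ¬ p ∣ 5 * n) {a k k' : ℕ}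
    (h : k * p = (a + 1) * (5 * n) + k' * p) : ∃ s, 1 ≤ s ∧ k = k' + s * (5 * n) := by
  have hp0 : 0 < p := hp.pos
  have hk' : k' ≤ k := by nlinarith
  have h2 : (k - k') * p = (a + 1) * (5 * n) := by
    rw [Nat.sub_mul]; omega
  have hdvd : p ∣ (a + 1) * (5 * n) := ⟨k - k', by rw [← h2]; ring⟩
  have hpa : p ∣ a + 1 :=
    (Nat.Coprime.dvd_of_dvd_mul_right (hp.coprime_iff_not_dvd.mpr hpm) hdvd)
  obtain ⟨s, hs⟩ := hpa
  have hs1 : 1 ≤ s := by rcases Nat.eq_zero_or_pos s with rfl | h1; · omega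
                         · exact h1
  refine ⟨s, hs1, ?_⟩
  have h3 : (k - k') * p = (s * (5 * n)) * p := by rw [h2, hs]; ring
  have h4 := Nat.eq_of_mul_eq_mul_right hp0 h3
  omega

theorem apery_small_ahff (p n : ℕ) (hp : p.Prime) (hp5 : p ≠ 5)
    (hn : 2 ≤ n) (h : 5 * n < 2 * p) :
    Apery (Gen3 (5 * n) (2 * p) (3 * p)) (5 * n) =
      {0} ∪ {x | ∃ k, 2 ≤ k ∧ k ≤ 5 * n - 1 ∧ x = k * p} ∪ {(5 * n + 1) * p} := by
  have hp0 : 0 < p := hp.pos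
  have hp1 : 1 ≤ p := hp0
  have hpm : ¬ p ∣ 5 * n := by
    intro hd
    rcases (Nat.Prime.dvd_mul hp).mp hd with h5 | hdn
    · exact hp5 ((Nat.prime_dvd_prime_iff_eq hp (by norm_num)).mp h5)
    · exact absurd (Nat.le_of_dvd (by omega) hdn) (by omega)
  ext x
  simp only [Apery, Set.mem_setOf_eq, Set.mem_union, Set.mem_singleton_iff, mem_gen3_aux]
  constructor
  · rintro ⟨⟨a, k, hk, rfl⟩, hnot⟩
    have ha : a = 0 := by
      by_contra ha
      obtain ⟨a', rfl⟩ : ∃ a', a = a' + 1 := ⟨a - 1, by omega⟩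
      exact hnot ⟨a' * (5 * n) + k * p, ⟨a', k, hk, rfl⟩, by ring⟩
    subst ha
    simp only [zero_mul, zero_add] at hnot ⊢
    by_cases hk0 : k = 0
    · subst hk0; left; left; simp
    · by_cases hkle : k ≤ 5 * n - 1
      · left; right; exact ⟨k, by omega, hkle, rfl⟩
      · by_cases hkm : k = 5 * n
        · exfalso
          refine hnot ⟨(p - 1) * (5 * n) + 0 * p, ⟨p - 1, 0, by omega, rfl⟩, ?_⟩
          subst hkm
          zify [hp1]
          ring
        · by_cases hkm1 : k = 5 * n + 1
          · right; rw [hkm1]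
          · exfalso
            have hk2 : 5 * n ≤ k := by omega
            refine hnot ⟨(p - 1) * (5 * n) + (k - 5 * n) * p,
              ⟨p - 1, k - 5 * n, by omega, rfl⟩, ?_⟩
            zify [hp1, hk2]
            ring
  · rintro ((rfl | ⟨k, hk2, hkle, rfl⟩) | rfl)
    · refine ⟨⟨0, 0, by omega, by ring⟩, ?_⟩
      rintro ⟨y, hy, heq⟩
      omega
    · refine ⟨⟨0, k, by omega, by ring⟩, ?_⟩
      rintro ⟨y, ⟨a, k', hk', rfl⟩, heq⟩
      have h' : k * p = (a + 1) * (5 * n) + k' * p := by rw [heq]; ring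
      obtain ⟨s, hs1, hks⟩ := key_aux p n hp hpm h'
      have : 1 * (5 * n) ≤ s * (5 * n) := Nat.mul_le_mul_right _ hs1
      omega
    · refine ⟨⟨0, 5 * n + 1, by omega, by ring⟩, ?_⟩
      rintro ⟨y, ⟨a, k', hk', rfl⟩, heq⟩
      have h' : (5 * n + 1) * p = (a + 1) * (5 * n) + k' * p := by rw [heq]; ring
      obtain ⟨s, hs1, hks⟩ := key_aux p n hp hpm h'
      rcases (by omega : s = 1 ∨ 2 ≤ s) with rfl | hs2
      · omega
      · have : 2 * (5 * n) ≤ s * (5 * n) := Nat.mul_le_mul_right _ hs2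
        omega
end

section
/- Let p ≠ 5 be a prime and n ≥ 2 an integer with 2p > 5n. Let S = ⟨5n, 2p, 3p⟩. Then the half-factorial elements of Ap(S) are exactly 0, 2p, 3p, 4p, 5p, and 7p; hence the proportion of half-factorial elements of Ap(S) is 6/(5n). In particular, this proportion can be made arbitrarily close to 0. -/
namespace Scratch

lemma two_three (k : ℕ) (hk : 2 ≤ k) : ∃ b c : ℕ, 2*b + 3*c = k :=
  ⟨(k - 3*(k%2))/2, k%2, by omega⟩

lemma mem_gen3 {p n x : ℕ} :
    x ∈ Gen3 (5*n) (2*p) (3*p) ↔ ∃ a k : ℕ, (k = 0 ∨ 2 ≤ k) ∧ x = a*(5*n) + k*p := by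
  constructor
  · rintro ⟨a, b, c, rfl⟩
    exact ⟨a, 2*b+3*c, by omega, by ring⟩
  · rintro ⟨a, k, hk, rfl⟩
    rcases hk with rfl | hk
    · exact ⟨a, 0, 0, by ring⟩
    · obtain ⟨b, c, hbc⟩ := two_three k hk
      exact ⟨a, b, c, by rw [← hbc]; ring⟩

lemma cop {p n : ℕ} (hp : p.Prime) (hp5 : p ≠ 5) (hn : 2 ≤ n) (h : 5*n < 2*p) :
    Nat.Coprime p (5*n) := by
  have h5 : Nat.Coprime p 5 := (Nat.coprime_primes hp (by norm_num)).mpr hp5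
  have hn' : Nat.Coprime p n := by
    rw [hp.coprime_iff_not_dvd]
    intro hd
    have := Nat.le_of_dvd (by omega) hd
    omega
  exact Nat.Coprime.mul_right h5 hn'

lemma keyL {p n : ℕ} (hp : 0 < p) (hcop : Nat.Coprime p (5*n))
    {j k a : ℕ} (h : j * p = a * (5*n) + k * p) :
    ∃ t, a = p * t ∧ j = k + t * (5*n) := by
  have hjk : k ≤ j := by
    have h1 : k * p ≤ j * p := by rw [h]; exact Nat.le_add_left _ _
    exact Nat.le_of_mul_le_mul_right h1 hp
  have h2 : (j - k) * p = a * (5*n) := by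
    rw [Nat.sub_mul, h, Nat.add_sub_cancel]
  have hdvd : p ∣ a := hcop.dvd_of_dvd_mul_right ⟨j - k, by rw [← h2, mul_comm]⟩
  obtain ⟨t, rfl⟩ := hdvd
  refine ⟨t, rfl, ?_⟩
  have h3 : j * p = (k + t * (5*n)) * p := by rw [h]; ring
  exact Nat.eq_of_mul_eq_mul_right hp h3

lemma apery_eq {p n : ℕ} (hp : p.Prime) (hp5 : p ≠ 5) (hn : 2 ≤ n) (h : 5*n < 2*p) :
    Apery (Gen3 (5*n) (2*p) (3*p)) (5*n)
      = (· * p) '' ({0, 5*n+1} ∪ Set.Icc 2 (5*n-1)) := by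
  have hp0 : 0 < p := hp.pos
  have hcop := cop hp hp5 hn h
  ext x
  constructor
  · rintro ⟨hxS, hxA⟩
    obtain ⟨a, k, hk, rfl⟩ := mem_gen3.mp hxS
    have ha : a = 0 := by
      by_contra ha
      obtain ⟨a', rfl⟩ : ∃ a', a = a' + 1 := ⟨a - 1, by omega⟩
      exact hxA ⟨a' * (5*n) + k*p, mem_gen3.mpr ⟨a', k, hk, rfl⟩, by ring⟩
    subst ha
    refine ⟨k, ?_, by simp⟩
    simp only [Set.mem_union, Set.mem_insert_iff, Set.mem_singleton_iff, Set.mem_Icc]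
    by_contra hk'
    push_neg at hk'
    obtain ⟨p', rfl⟩ : ∃ p', p = p' + 1 := ⟨p - 1, by omega⟩
    obtain ⟨j, rfl⟩ : ∃ j, k = j + 5*n := ⟨k - 5*n, by omega⟩
    exact hxA ⟨p' * (5*n) + j * (p'+1), mem_gen3.mpr ⟨p', j, by omega, rfl⟩, by ring⟩
  · rintro ⟨k, hk, rfl⟩
    simp only [Set.mem_union, Set.mem_insert_iff, Set.mem_singleton_iff, Set.mem_Icc] at hk
    refine ⟨mem_gen3.mpr ⟨0, k, by omega, by ring⟩, ?_⟩
    rintro ⟨y, hyS, hy⟩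
    obtain ⟨a, j, hj, rfl⟩ := mem_gen3.mp hyS
    have h' : k * p = (a+1) * (5*n) + j * p := by
      simp only at hy; rw [hy]; ring
    obtain ⟨t, hat, hkt⟩ := keyL hp0 hcop h'
    have ht1 : t = 1 ∨ 2 ≤ t := by
      rcases Nat.eq_zero_or_pos t with rfl | ht
      · simp at hat
      · omega
    rcases ht1 with rfl | h2
    · rw [one_mul] at hkt
      omega
    · have hge := Nat.mul_le_mul_right (5*n) h2
      generalize hT : t * (5*n) = T at hkt hge
      omega

lemma factlens {p n : ℕ} (hp : p.Prime) (hp5 : p ≠ 5) (hn : 2 ≤ n) (h : 5*n < 2*p)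
    {k : ℕ} (hk : k ≤ 5*n + 1) (hk5 : k ≠ 5*n) (L : ℕ) :
    L ∈ FactLens3 (5*n) (2*p) (3*p) (k*p) ↔ ∃ b c : ℕ, 2*b + 3*c = k ∧ L = b + c := by
  have hp0 : 0 < p := hp.pos
  have hcop := cop hp hp5 hn h
  constructor
  · rintro ⟨a, b, c, hfact, rfl⟩
    have h' : k * p = a * (5*n) + (2*b+3*c) * p := by rw [hfact]; ring
    obtain ⟨t, hat, hkt⟩ := keyL hp0 hcop h'
    have ht : t = 0 := by
      have h01 : t = 0 ∨ t = 1 ∨ 2 ≤ t := by omega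
      rcases h01 with rfl | rfl | h2
      · rfl
      · rw [one_mul] at hkt; omega
      · exfalso
        have hge := Nat.mul_le_mul_right (5*n) h2
        generalize hT : t * (5*n) = T at hkt hge
        omega
    subst ht
    rw [mul_zero] at hat
    subst hat
    exact ⟨b, c, by omega, by omega⟩
  · rintro ⟨b, c, hbc, rfl⟩
    exact ⟨0, b, c, by rw [← hbc]; ring, by omega⟩

lemma hf_small {p n : ℕ} (hp : p.Prime) (hp5 : p ≠ 5) (hn : 2 ≤ n) (h : 5*n < 2*p)
    {k : ℕ} (hk : k = 0 ∨ k = 2 ∨ k = 3 ∨ k = 4 ∨ k = 5 ∨ k = 7) :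
    HF3 (5*n) (2*p) (3*p) (k*p) := by
  intro L₁ h₁ L₂ h₂
  rw [factlens hp hp5 hn h (by omega) (by omega)] at h₁ h₂
  obtain ⟨b₁, c₁, hbc₁, rfl⟩ := h₁
  obtain ⟨b₂, c₂, hbc₂, rfl⟩ := h₂
  omega

lemma not_hf {p n : ℕ} (hp : p.Prime) (hp5 : p ≠ 5) (hn : 2 ≤ n) (h : 5*n < 2*p)
    {k : ℕ} (hk6 : 6 ≤ k) (hk7 : k ≠ 7) (hk : k ≤ 5*n+1) (hk5 : k ≠ 5*n) :
    ¬ HF3 (5*n) (2*p) (3*p) (k*p) := by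
  intro hHF
  have h₁ : ((k - 3*(k%2))/2 + k%2) ∈ FactLens3 (5*n) (2*p) (3*p) (k*p) :=
    (factlens hp hp5 hn h hk hk5 _).mpr ⟨(k - 3*(k%2))/2, k%2, by omega, rfl⟩
  have h₂ : ((k - 3*(k%2+2))/2 + (k%2+2)) ∈ FactLens3 (5*n) (2*p) (3*p) (k*p) :=
    (factlens hp hp5 hn h hk hk5 _).mpr ⟨(k - 3*(k%2+2))/2, k%2+2, by omega, rfl⟩
  have := hHF _ h₁ _ h₂
  omega

end Scratch

theorem ahff_arbitrarily_small (p n : ℕ) (hp : p.Prime) (hp5 : p ≠ 5)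
    (hn : 2 ≤ n) (h : 5 * n < 2 * p) :
    {x ∈ Apery (Gen3 (5 * n) (2 * p) (3 * p)) (5 * n) | HF3 (5 * n) (2 * p) (3 * p) x}
      = {0, 2 * p, 3 * p, 4 * p, 5 * p, 7 * p} ∧
    (({x ∈ Apery (Gen3 (5 * n) (2 * p) (3 * p)) (5 * n) |
        HF3 (5 * n) (2 * p) (3 * p) x}.ncard : ℚ) /
      ((Apery (Gen3 (5 * n) (2 * p) (3 * p)) (5 * n)).ncard : ℚ) = 6 / (5 * n)) ∧
    (∀ ε : ℚ, 0 < ε → ∃ p' n' : ℕ, p'.Prime ∧ p' ≠ 5 ∧ 2 ≤ n' ∧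
      5 * n' < 2 * p' ∧ (6 : ℚ) / (5 * n') < ε) := by
  have hp0 : 0 < p := hp.pos
  have hA := Scratch.apery_eq hp hp5 hn h
  have mem_ap : ∀ k : ℕ, (k = 0 ∨ (2 ≤ k ∧ k ≤ 7)) →
      k * p ∈ Apery (Gen3 (5 * n) (2 * p) (3 * p)) (5 * n) := by
    intro k hk
    rw [hA]
    refine ⟨k, ?_, rfl⟩
    simp only [Set.mem_union, Set.mem_insert_iff, Set.mem_singleton_iff, Set.mem_Icc]
    omega
  have part1 : {x ∈ Apery (Gen3 (5 * n) (2 * p) (3 * p)) (5 * n) |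
      HF3 (5 * n) (2 * p) (3 * p) x} = {0, 2 * p, 3 * p, 4 * p, 5 * p, 7 * p} := by
    ext x
    simp only [Set.mem_setOf_eq, Set.mem_insert_iff, Set.mem_singleton_iff]
    constructor
    · rintro ⟨hxA, hxHF⟩
      rw [hA] at hxA
      obtain ⟨k, hk, rfl⟩ := hxA
      simp only [Set.mem_union, Set.mem_insert_iff, Set.mem_singleton_iff, Set.mem_Icc] at hk
      by_cases hsm : k = 0 ∨ k = 2 ∨ k = 3 ∨ k = 4 ∨ k = 5 ∨ k = 7
      · rcases hsm with rfl|rfl|rfl|rfl|rfl|rfl <;> simp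
      · exfalso
        push_neg at hsm
        exact Scratch.not_hf hp hp5 hn h (by omega) (by omega) (by omega) (by omega) hxHF
    · intro hx
      rcases hx with rfl|rfl|rfl|rfl|rfl|rfl
      · refine ⟨?_, ?_⟩
        · have := mem_ap 0 (by omega); rwa [zero_mul] at this
        · have := Scratch.hf_small hp hp5 hn h (k := 0) (by omega)
          rwa [zero_mul] at this
      · exact ⟨mem_ap 2 (by omega), Scratch.hf_small hp hp5 hn h (by omega)⟩
      · exact ⟨mem_ap 3 (by omega), Scratch.hf_small hp hp5 hn h (by omega)⟩
      · exact ⟨mem_ap 4 (by omega), Scratch.hf_small hp hp5 hn h (by omega)⟩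
      · exact ⟨mem_ap 5 (by omega), Scratch.hf_small hp hp5 hn h (by omega)⟩
      · exact ⟨mem_ap 7 (by omega), Scratch.hf_small hp hp5 hn h (by omega)⟩
  refine ⟨part1, ?_, ?_⟩
  · -- ratio
    have hinj : Function.Injective (· * p) := fun a b hab =>
      Nat.eq_of_mul_eq_mul_right hp0 hab
    have hap_card : (Apery (Gen3 (5 * n) (2 * p) (3 * p)) (5 * n)).ncard = 5 * n := by
      rw [hA, Set.ncard_image_of_injective _ hinj]
      have hset : ({0, 5*n+1} ∪ Set.Icc 2 (5*n-1) : Set ℕ)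
          = ↑(insert 0 (insert (5*n+1) (Finset.Icc 2 (5*n-1)))) := by
        ext x
        simp only [Set.mem_union, Set.mem_insert_iff, Set.mem_singleton_iff, Set.mem_Icc,
          Finset.coe_insert, Finset.coe_Icc]
        omega
      rw [hset, Set.ncard_coe_finset,
        Finset.card_insert_of_notMem (by simp only [Finset.mem_insert, Finset.mem_Icc]; omega),
        Finset.card_insert_of_notMem (by simp only [Finset.mem_Icc]; omega),
        Nat.card_Icc]
      omega
    have hhf_card : ({0, 2*p, 3*p, 4*p, 5*p, 7*p} : Set ℕ).ncard = 6 := by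
      have hfin : ({0, 2*p, 3*p, 4*p, 5*p, 7*p} : Set ℕ)
          = ↑({0, 2*p, 3*p, 4*p, 5*p, 7*p} : Finset ℕ) := by simp
      rw [hfin, Set.ncard_coe_finset,
        Finset.card_insert_of_notMem (by
          simp only [Finset.mem_insert, Finset.mem_singleton]; omega),
        Finset.card_insert_of_notMem (by
          simp only [Finset.mem_insert, Finset.mem_singleton]; omega),
        Finset.card_insert_of_notMem (by
          simp only [Finset.mem_insert, Finset.mem_singleton]; omega),
        Finset.card_insert_of_notMem (by
          simp only [Finset.mem_insert, Finset.mem_singleton]; omega),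
        Finset.card_insert_of_notMem (by simp only [Finset.mem_singleton]; omega),
        Finset.card_singleton]
    rw [part1, hhf_card, hap_card]
    push_cast
    ring
  · -- arbitrarily small
    intro ε hε
    set m : ℕ := ⌈6/ε⌉₊ + 2 with hm
    obtain ⟨q, hq, hqp⟩ := Nat.exists_infinite_primes (5 * m + 1)
    refine ⟨q, m, hqp, by omega, by omega, by omega, ?_⟩
    have h1 : (6:ℚ)/ε < m := by
      calc (6:ℚ)/ε ≤ ⌈6/ε⌉₊ := Nat.le_ceil _
      _ < m := by exact_mod_cast Nat.lt_succ_of_lt (Nat.lt_succ_self _)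
    have h2 : (6:ℚ) < m * ε := (div_lt_iff₀ hε).mp h1
    have hm0 : (0:ℚ) < 5 * m := by positivity
    rw [div_lt_iff₀ hm0]
    nlinarith [h2, hε.le, (Nat.cast_nonneg m : (0:ℚ) ≤ m)]
end

section
/- For each integer n ≥ 2, the numerical semigroup S = ⟨n², n² + n, 2n² + 1⟩ satisfies Ap(S) = {a(n² + n) + b(2n² + 1) : 0 ≤ a, b ≤ n − 1}. -/
/-- Uniqueness of quotient and remainder. -/
lemma mul_add_inj {N x y r s : ℕ} (hN : 0 < N) (hr : r < N) (hs : s < N)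
    (h : x * N + r = y * N + s) : x = y ∧ r = s := by
  have hx : (x * N + r) / N = x := by
    rw [mul_comm, Nat.mul_add_div hN, Nat.div_eq_of_lt hr]
    omega
  have hy : (y * N + s) / N = y := by
    rw [mul_comm, Nat.mul_add_div hN, Nat.div_eq_of_lt hs]
    omega
  have hxm : (x * N + r) % N = r := by
    rw [mul_comm, Nat.mul_add_mod, Nat.mod_eq_of_lt hr]
  have hym : (y * N + s) % N = s := by
    rw [mul_comm, Nat.mul_add_mod, Nat.mod_eq_of_lt hs]
  constructor
  · rw [← hx, h, hy]
  · rw [← hxm, h, hym]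

theorem apery_ahf_family (n : ℕ) (hn : 2 ≤ n) :
    Apery (Gen3 (n ^ 2) (n ^ 2 + n) (2 * n ^ 2 + 1)) (n ^ 2) =
      {x | ∃ a b : ℕ, a ≤ n - 1 ∧ b ≤ n - 1 ∧
        x = a * (n ^ 2 + n) + b * (2 * n ^ 2 + 1)} := by
  obtain ⟨k, rfl⟩ : ∃ k, n = k + 2 := ⟨n - 2, by omega⟩
  ext x
  simp only [Apery, Gen3, Set.mem_setOf_eq]
  constructor
  · rintro ⟨⟨a', b', c', rfl⟩, hna⟩
    rcases a' with _ | a''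
    · -- a' = 0; show b' < k+2 and c' < k+2
      have hb' : b' < k + 2 := by
        by_contra hbn
        push_neg at hbn
        obtain ⟨e, rfl⟩ : ∃ e, b' = e + (k + 2) := ⟨b' - (k + 2), by omega⟩
        exact hna ⟨(k + 2) * (k + 2) ^ 2 + e * ((k + 2) ^ 2 + (k + 2)) +
          c' * (2 * (k + 2) ^ 2 + 1), ⟨k + 2, e, c', rfl⟩, by ring⟩
      have hc' : c' < k + 2 := by
        by_contra hcn
        push_neg at hcn
        obtain ⟨f, rfl⟩ : ∃ f, c' = f + (k + 2) := ⟨c' - (k + 2), by omega⟩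
        exact hna ⟨(2 * k + 2) * (k + 2) ^ 2 + (b' + 1) * ((k + 2) ^ 2 + (k + 2)) +
          f * (2 * (k + 2) ^ 2 + 1), ⟨2 * k + 2, b' + 1, f, rfl⟩, by ring⟩
      exact ⟨b', c', by omega, by omega, by ring⟩
    · exact absurd ⟨a'' * (k + 2) ^ 2 + b' * ((k + 2) ^ 2 + (k + 2)) +
        c' * (2 * (k + 2) ^ 2 + 1), ⟨a'', b', c', rfl⟩, by ring⟩ hna
  · rintro ⟨a, b, ha, hb, rfl⟩
    have ha' : a ≤ k + 1 := by omega
    have hb'' : b ≤ k + 1 := by omega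
    refine ⟨⟨0, a, b, by ring⟩, ?_⟩
    rintro ⟨y, ⟨a', b', c', rfl⟩, heq⟩
    have key : (a + 2 * b) * (k + 2) ^ 2 + (a * (k + 2) + b) =
        (a' + b' + 2 * c' + 1) * (k + 2) ^ 2 + (b' * (k + 2) + c') := by
      have e1 : (a + 2 * b) * (k + 2) ^ 2 + (a * (k + 2) + b) =
          a * ((k + 2) ^ 2 + (k + 2)) + b * (2 * (k + 2) ^ 2 + 1) := by ring
      have e2 : (a' + b' + 2 * c' + 1) * (k + 2) ^ 2 + (b' * (k + 2) + c') =
          a' * (k + 2) ^ 2 + b' * ((k + 2) ^ 2 + (k + 2)) + c' * (2 * (k + 2) ^ 2 + 1)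
            + (k + 2) ^ 2 := by ring
      rw [e1, e2]
      exact heq
    have hu : a * (k + 2) + b < (k + 2) ^ 2 := by
      nlinarith [mul_le_mul_left ha' (k + 2)]
    have hBA : a' + b' + 2 * c' + 1 ≤ a + 2 * b := by
      by_contra hlt
      push_neg at hlt
      have h2 : (a + 2 * b + 1) * (k + 2) ^ 2 ≤ (a' + b' + 2 * c' + 1) * (k + 2) ^ 2 :=
        mul_le_mul_left (by omega) ((k + 2) ^ 2)
      have h3 : (a + 2 * b + 1) * (k + 2) ^ 2 = (a + 2 * b) * (k + 2) ^ 2 + (k + 2) ^ 2 := by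
        ring
      generalize hM : (k + 2) ^ 2 = M at key hu h2 h3
      generalize hA : a + 2 * b = A at key h2 h3
      generalize hB : a' + b' + 2 * c' + 1 = B at key h2
      generalize hU : a * (k + 2) + b = u at key hu
      generalize hV : b' * (k + 2) + c' = v at key
      linarith
    obtain ⟨d, hd⟩ : ∃ d, a + 2 * b = (a' + b' + 2 * c' + 1) + d := ⟨a + 2 * b - (a' + b' + 2 * c' + 1), by omega⟩
    have hv : b' * (k + 2) + c' = d * (k + 2) ^ 2 + (a * (k + 2) + b) := by
      have e4 : ((a' + b' + 2 * c' + 1) + d) * (k + 2) ^ 2 =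
          (a' + b' + 2 * c' + 1) * (k + 2) ^ 2 + d * (k + 2) ^ 2 := by ring
      rw [hd, e4] at key
      linarith
    have hc'' := Nat.div_add_mod c' (k + 2)
    set q := c' / (k + 2) with hq'
    set r := c' % (k + 2) with hr'
    have hr : r < k + 2 := Nat.mod_lt _ (by omega)
    have h5 : (b' + q) * (k + 2) + r = (d * (k + 2) + a) * (k + 2) + b := by
      have e5 : (b' + q) * (k + 2) = b' * (k + 2) + (k + 2) * q := by ring
      have e6 : (d * (k + 2) + a) * (k + 2) = d * (k + 2) ^ 2 + a * (k + 2) := by ring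
      linarith [hv, hc'', e5, e6]
    obtain ⟨h6, h7⟩ := mul_add_inj (by omega) hr (show b < k + 2 by omega) h5
    have hc3 : c' = (k + 2) * q + b := by
      rw [← hc'', h7]
    obtain ⟨P, hP⟩ : ∃ P, d * (k + 2) = P := ⟨_, rfl⟩
    obtain ⟨Q, hQ⟩ : ∃ Q, (k + 2) * q = Q := ⟨_, rfl⟩
    have hqQ : q ≤ Q := by
      rw [← hQ]
      exact Nat.le_mul_of_pos_left q (by omega)
    rw [hP] at h6
    rw [hQ] at hc3
    omega
end

section
/- For each integer n ≥ 2, the numerical semigroup S = ⟨n², n² + n, 2n² + 1⟩ is Apéry half-factorial: every element of Ap(S) has all factorizations of the same length. -/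
theorem ahf_family_is_ahf (n : ℕ) (hn : 2 ≤ n) :
    ∀ x ∈ Apery (Gen3 (n ^ 2) (n ^ 2 + n) (2 * n ^ 2 + 1)) (n ^ 2),
      HF3 (n ^ 2) (n ^ 2 + n) (2 * n ^ 2 + 1) x := by
  obtain ⟨m, rfl⟩ : ∃ m, n = m + 2 := ⟨n - 2, by omega⟩
  set n : ℕ := m + 2 with hn2
  intro x hx L₁ hL₁ L₂ hL₂
  obtain ⟨hxS, hxA⟩ := hx
  -- In the Apéry set, every factorization has a = 0 and c < n.
  have key : ∀ a b c : ℕ, x = a * n ^ 2 + b * (n ^ 2 + n) + c * (2 * n ^ 2 + 1) →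
      a = 0 ∧ c < n := by
    intro a b c h
    have ha : a = 0 := by
      by_contra ha
      obtain ⟨a', rfl⟩ : ∃ a', a = a' + 1 := ⟨a - 1, by omega⟩
      exact hxA ⟨a' * n ^ 2 + b * (n ^ 2 + n) + c * (2 * n ^ 2 + 1),
        ⟨a', b, c, rfl⟩, by rw [h]; ring⟩
    refine ⟨ha, ?_⟩
    by_contra hc
    push_neg at hc
    obtain ⟨c', rfl⟩ : ∃ c', c = c' + n := ⟨c - n, by omega⟩
    refine hxA ⟨(a + 2 * m + 2) * n ^ 2 + (b + 1) * (n ^ 2 + n) + c' * (2 * n ^ 2 + 1),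
      ⟨a + 2 * m + 2, b + 1, c', rfl⟩, ?_⟩
    rw [h, hn2]; ring
  obtain ⟨a, b, c, hf, rfl⟩ := hL₁
  obtain ⟨a', b', c', hf', rfl⟩ := hL₂
  obtain ⟨ha, hc⟩ := key a b c hf
  obtain ⟨ha', hc'⟩ := key a' b' c' hf'
  subst ha ha'
  -- x mod n determines c
  have e1 : x % n = c := by
    have : x = c + (b * n + b + 2 * c * n) * n := by rw [hf]; ring
    rw [this, Nat.add_mul_mod_self_right, Nat.mod_eq_of_lt hc]
  have e2 : x % n = c' := by
    have : x = c' + (b' * n + b' + 2 * c' * n) * n := by rw [hf']; ring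
    rw [this, Nat.add_mul_mod_self_right, Nat.mod_eq_of_lt hc']
  have hcc : c = c' := by rw [← e1, e2]
  subst hcc
  have hbb : b = b' := by
    have hmul : b * (n ^ 2 + n) = b' * (n ^ 2 + n) := by omega
    have hpos : 0 < n ^ 2 + n := by positivity
    exact Nat.eq_of_mul_eq_mul_right hpos hmul
  omega
end

section
/- A numerical semigroup S is Apéry half-factorial if and only if its Apéry poset is graded, i.e., for every x ∈ Ap(S), all maximal chains from 0 to x in the poset (Ap(S), ⪯) have the same length. -/
/-- The strict order of the Apéry poset: `x ≺ y` iff `y - x` is a nonzero element of `S`. -/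
def PosetLt (S : Set ℕ) (x y : ℕ) : Prop := x ≠ y ∧ ∃ s ∈ S, y = x + s

/-- `y` covers `x` in the Apéry poset. -/
def PosetCovBy (S : Set ℕ) (m x y : ℕ) : Prop :=
  PosetLt S x y ∧ ¬∃ w ∈ Apery S m, PosetLt S x w ∧ PosetLt S w y

/-- `l` is a maximal (saturated) chain from `0` to `x` in the Apéry poset. -/
def MaxChain (S : Set ℕ) (m : ℕ) (l : List ℕ) (x : ℕ) : Prop :=
  (∀ z ∈ l, z ∈ Apery S m) ∧ l.head? = some 0 ∧ l.getLast? = some x ∧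
    l.Chain' (PosetCovBy S m)


/-!
A step `x ⋖ y` between elements of the Apéry set is exactly `y = x + a` with `a` an atom: an
element of `S` strictly between `x` and `y` would lie in the Apéry set again, since the Apéry set
is closed under subtracting elements of `S`, and so would split `y - x` into two nonzero summands.
Hence the saturated chains from `0` to `x` with `k + 1` elements are the ordered factorizations of
`x` into `k` atoms, and `x` is half-factorial iff all these chains have the same length.
-/

theorem mem_factLens_iff {A : Set ℕ} {n L : ℕ} :
    L ∈ FactLens A n ↔ ∃ f : List ℕ, (∀ a ∈ f, a ∈ A) ∧ f.sum = n ∧ f.length = L := by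
  classical
  constructor
  · rintro ⟨c, hcA, rfl, rfl⟩
    refine ⟨(Finsupp.toMultiset c).toList, fun a ha => hcA ?_, ?_, ?_⟩
    · simpa [Multiset.mem_toList, Finsupp.mem_toMultiset] using ha
    · rw [Multiset.sum_toList, Finsupp.sum_toMultiset]
      simp only [smul_eq_mul]
    · rw [Multiset.length_toList, Finsupp.card_toMultiset]
      rfl
  · rintro ⟨f, hfA, rfl, rfl⟩
    refine ⟨Multiset.toFinsupp f, fun a ha => hfA a ?_, ?_, ?_⟩
    · simpa [Multiset.toFinsupp_support] using ha
    · have := Finsupp.sum_toMultiset (Multiset.toFinsupp (f : Multiset ℕ))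
      rw [Multiset.toFinsupp_toMultiset] at this
      simpa [smul_eq_mul] using this.symm
    · exact (Multiset.toFinsupp_sum_eq (f : Multiset ℕ)).trans (Multiset.coe_card f)

section AperyPoset

variable {S : Set ℕ} {m : ℕ}

/-- `MaxChain S m l x` is `SaturatedChain S m 0 x l`; a free starting point allows induction. -/
def SaturatedChain (S : Set ℕ) (m a x : ℕ) (l : List ℕ) : Prop :=
  (∀ z ∈ l, z ∈ Apery S m) ∧ l.head? = some a ∧ l.getLast? = some x ∧
    l.IsChain (PosetCovBy S m)

theorem mem_apery_of_eq_add (hadd : ∀ a ∈ S, ∀ b ∈ S, a + b ∈ S) {x u v : ℕ}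
    (hx : x ∈ Apery S m) (hu : u ∈ S) (hv : v ∈ S) (h : x = u + v) : u ∈ Apery S m := by
  refine ⟨hu, ?_⟩
  rintro ⟨y, hy, rfl⟩
  exact hx.2 ⟨y + v, hadd _ hy _ hv, by omega⟩

theorem posetCovBy_add_atom {x a : ℕ} (ha : a ∈ Atoms S) : PosetCovBy S m x (x + a) := by
  obtain ⟨haS, ha0, hirr⟩ := ha
  refine ⟨⟨by omega, a, haS, rfl⟩, ?_⟩
  rintro ⟨w, -, ⟨hxw, u, hu, rfl⟩, ⟨hwy, v, hv, hy⟩⟩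
  exact hirr ⟨u, hu, v, hv, by omega, by omega, by omega⟩

theorem exists_atom_of_posetCovBy (hadd : ∀ a ∈ S, ∀ b ∈ S, a + b ∈ S) {x y : ℕ}
    (hx : x ∈ S) (hy : y ∈ Apery S m) (h : PosetCovBy S m x y) :
    ∃ a ∈ Atoms S, y = x + a := by
  obtain ⟨⟨hne, a, ha, rfl⟩, hsat⟩ := h
  refine ⟨a, ⟨ha, by omega, ?_⟩, rfl⟩
  rintro ⟨u, hu, v, hv, hu0, hv0, rfl⟩
  exact hsat ⟨x + u, mem_apery_of_eq_add hadd hy (hadd _ hx _ hu) hv (by ring),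
    ⟨by omega, u, hu, rfl⟩, ⟨by omega, v, hv, by ring⟩⟩

theorem SaturatedChain.exists_atoms (hadd : ∀ a ∈ S, ∀ b ∈ S, a + b ∈ S) :
    ∀ {a x : ℕ} {l : List ℕ}, SaturatedChain S m a x l →
      ∃ f : List ℕ, (∀ b ∈ f, b ∈ Atoms S) ∧ x = a + f.sum ∧ l.length = f.length + 1
  | _, _, [], ⟨_, hhead, _⟩ => by simp at hhead
  | _, _, [_], ⟨_, hhead, hlast, _⟩ => by
    simp only [List.head?_cons, List.getLast?_singleton, Option.some.injEq] at hhead hlast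
    exact ⟨[], by simp, by simp [← hhead, ← hlast], rfl⟩
  | a, x, _ :: b :: l, ⟨hmem, hhead, hlast, hchain⟩ => by
    simp only [List.head?_cons, Option.some.injEq] at hhead
    subst hhead
    rw [List.isChain_cons_cons] at hchain
    obtain ⟨s, hs, rfl⟩ :=
      exists_atom_of_posetCovBy hadd (hmem _ (by simp)).1 (hmem _ (by simp)) hchain.1
    obtain ⟨f, hf, rfl, hlen⟩ := SaturatedChain.exists_atoms hadd
      ⟨fun z hz => hmem z (List.mem_cons_of_mem _ hz), rfl, hlast, hchain.2⟩
    refine ⟨s :: f, List.forall_mem_cons.2 ⟨hs, hf⟩, by simp [add_assoc], by simp [hlen]⟩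

theorem exists_saturatedChain_of_atoms (hadd : ∀ a ∈ S, ∀ b ∈ S, a + b ∈ S) :
    ∀ {a x : ℕ} {f : List ℕ}, (∀ b ∈ f, b ∈ Atoms S) → a ∈ S → x ∈ Apery S m →
      x = a + f.sum → ∃ l, SaturatedChain S m a x l ∧ l.length = f.length + 1
  | a, x, [], _, _, hx, hsum => by
    obtain rfl : x = a := by simpa using hsum
    exact ⟨[x], ⟨by simpa using hx, rfl, rfl, List.isChain_singleton x⟩, rfl⟩
  | a, x, b :: f, hf, ha, hx, hsum => by
    obtain ⟨hb, hf⟩ := List.forall_mem_cons.1 hf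
    obtain ⟨_ | ⟨c, l⟩, ⟨hmem, hhead, hlast, hchain⟩, hlen⟩ :=
      exists_saturatedChain_of_atoms hadd hf (hadd _ ha _ hb.1) hx (by simp [hsum, add_assoc])
    · simp at hhead
    obtain rfl : c = a + b := by simpa using hhead
    have haApery : a ∈ Apery S m := mem_apery_of_eq_add hadd (hmem _ (by simp)) ha hb.1 rfl
    refine ⟨a :: (a + b) :: l, ⟨List.forall_mem_cons.2 ⟨haApery, hmem⟩, rfl, ?_, ?_⟩, ?_⟩
    · rwa [List.getLast?_cons_cons]
    · rw [List.isChain_cons_cons]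
      exact ⟨posetCovBy_add_atom hb, hchain⟩
    · simp [hlen]

theorem exists_saturatedChain_length_iff (h0 : 0 ∈ S) (hadd : ∀ a ∈ S, ∀ b ∈ S, a + b ∈ S)
    {x L : ℕ} (hx : x ∈ Apery S m) :
    (∃ l, SaturatedChain S m 0 x l ∧ l.length = L + 1) ↔ L ∈ FactLens (Atoms S) x := by
  rw [mem_factLens_iff]
  constructor
  · rintro ⟨l, hl, hlen'⟩
    obtain ⟨f, hf, hsum, hlen⟩ := hl.exists_atoms hadd
    exact ⟨f, hf, by omega, by omega⟩
  · rintro ⟨f, hf, hsum, rfl⟩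
    exact exists_saturatedChain_of_atoms hadd hf h0 hx (by omega)

theorem halfFactorial_iff_saturatedChain_length_eq (h0 : 0 ∈ S)
    (hadd : ∀ a ∈ S, ∀ b ∈ S, a + b ∈ S) {x : ℕ} (hx : x ∈ Apery S m) :
    HalfFactorial (Atoms S) x ↔ ∀ l₁ l₂ : List ℕ,
      SaturatedChain S m 0 x l₁ → SaturatedChain S m 0 x l₂ → l₁.length = l₂.length := by
  have hlen (L : ℕ) := exists_saturatedChain_length_iff (L := L) h0 hadd hx
  constructor
  · intro hHF l₁ l₂ h₁ h₂
    obtain ⟨f₁, -, -, hlen₁⟩ := h₁.exists_atoms hadd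
    obtain ⟨f₂, -, -, hlen₂⟩ := h₂.exists_atoms hadd
    rw [hlen₁, hlen₂, hHF _ ((hlen _).1 ⟨l₁, h₁, hlen₁⟩) _ ((hlen _).1 ⟨l₂, h₂, hlen₂⟩)]
  · intro hgraded L₁ hL₁ L₂ hL₂
    obtain ⟨l₁, h₁, hlen₁⟩ := (hlen L₁).2 hL₁
    obtain ⟨l₂, h₂, hlen₂⟩ := (hlen L₂).2 hL₂
    have := hgraded l₁ l₂ h₁ h₂
    omega

end AperyPoset

theorem AHF_iff_graded (S : Set ℕ) (hS : IsNumericalSemigroup S) :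
    (∀ n ∈ Apery S (mult S), HalfFactorial (Atoms S) n) ↔
    (∀ x ∈ Apery S (mult S), ∀ l₁ l₂ : List ℕ,
      MaxChain S (mult S) l₁ x → MaxChain S (mult S) l₂ x →
        l₁.length = l₂.length) := by
  obtain ⟨h0, hadd, -⟩ := hS
  exact forall₂_congr fun x hx => halfFactorial_iff_saturatedChain_length_eq h0 hadd hx
end

section
/- Let p and q be odd primes with p > 2q + 4, and let S = ⟨4q + 8, 2p, qp⟩. For each 0 ≤ i < q, the element (2q + 2i)p lies in Ap(S) and has elasticity (q + i)/(2 + i). -/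
theorem elasticity_large_mae_family (p q : ℕ) (hp : p.Prime) (hq : q.Prime)
    (hpo : Odd p) (hqo : Odd q) (hpq : 2 * q + 4 < p) (i : ℕ) (hi : i < q) :
    (2 * q + 2 * i) * p ∈ Apery (Gen3 (4 * q + 8) (2 * p) (q * p)) (4 * q + 8) ∧
    elasticity3 (4 * q + 8) (2 * p) (q * p) ((2 * q + 2 * i) * p)
      = ((q : ℚ) + i) / (2 + i) := by
  obtain ⟨k, hk⟩ := hqo
  have hq2 := hq.two_le
  have hq3 : 3 ≤ q := by omega
  have hppos : 0 < p := by omega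
  -- p does not divide 4q+8
  have hpdvd : ¬ p ∣ (4 * q + 8) := by
    intro h
    obtain ⟨m, hm⟩ := h
    obtain ⟨j, hj⟩ := hpo
    have hm2 : m < 2 := by
      by_contra h2
      push_neg at h2
      have : p * 2 ≤ p * m := Nat.mul_le_mul_left p h2
      omega
    interval_cases m <;> omega
  -- key characterization of factorizations
  have key : ∀ a b c : ℕ, (2 * q + 2 * i) * p = a * (4 * q + 8) + b * (2 * p) + c * (q * p) →
      a = 0 ∧ ((b = q + i ∧ c = 0) ∨ (b = i ∧ c = 2)) := by
    intro a b c h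
    have hpa : p ∣ a * (4 * q + 8) := by
      have hd : a * (4 * q + 8) + (b * 2 + c * q) * p = (2 * q + 2 * i) * p := by
        rw [h]; ring
      have h1 : p ∣ a * (4 * q + 8) + (b * 2 + c * q) * p := by rw [hd]; exact ⟨2 * q + 2 * i, mul_comm _ _⟩
      have h3 := Nat.dvd_sub h1 ⟨b * 2 + c * q, mul_comm _ _⟩
      simpa using h3
    have ha : a = 0 := by
      rcases (Nat.Prime.dvd_mul hp).mp hpa with hpa' | hfg
      · by_contra ha0
        have h1 : p ≤ a := Nat.le_of_dvd (Nat.pos_of_ne_zero ha0) hpa'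
        have h2 : (2 * q + 2 * i) * p < a * (4 * q + 8) := by
          calc (2 * q + 2 * i) * p < (4 * q + 8) * p :=
                (Nat.mul_lt_mul_right hppos).mpr (by omega)
            _ = p * (4 * q + 8) := mul_comm _ _
            _ ≤ a * (4 * q + 8) := Nat.mul_le_mul_right _ h1
        have h3 : a * (4 * q + 8) ≤ (2 * q + 2 * i) * p := by
          rw [h]
          exact le_trans (Nat.le_add_right _ _) (Nat.le_add_right _ _)
        exact absurd h3 (not_le.mpr h2)
      · exact absurd hfg hpdvd
    subst ha
    rw [zero_mul, zero_add] at h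
    have heq : 2 * q + 2 * i = 2 * b + c * q := by
      have h' : (2 * q + 2 * i) * p = (2 * b + c * q) * p := by rw [h]; ring
      exact Nat.eq_of_mul_eq_mul_right hppos h'
    have hc4 : c < 4 := by
      by_contra hc
      push_neg at hc
      have h4 : 4 * q ≤ c * q := Nat.mul_le_mul_right q hc
      have h5 : c * q ≤ 2 * q + 2 * i := by linarith
      omega
    refine ⟨rfl, ?_⟩
    interval_cases c <;> omega
  constructor
  · refine ⟨⟨0, q + i, 0, by ring⟩, ?_⟩
    rintro ⟨y, ⟨a, b, c, hy⟩, hxy⟩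
    have h' : (2 * q + 2 * i) * p = (a + 1) * (4 * q + 8) + b * (2 * p) + c * (q * p) := by
      rw [hxy, hy]; ring
    exact absurd (key (a + 1) b c h').1 (by omega)
  · have hset : FactLens3 (4 * q + 8) (2 * p) (q * p) ((2 * q + 2 * i) * p) = {2 + i, q + i} := by
      ext L
      simp only [FactLens3, Set.mem_setOf_eq, Set.mem_insert_iff, Set.mem_singleton_iff]
      constructor
      · rintro ⟨a, b, c, h1, h2⟩
        obtain ⟨ha, hbc⟩ := key a b c h1
        rcases hbc with ⟨hb, hc⟩ | ⟨hb, hc⟩ <;> omega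
      · rintro (h | h)
        · exact ⟨0, i, 2, by ring, by omega⟩
        · exact ⟨0, q + i, 0, by ring, by omega⟩
    have hn0 : (2 * q + 2 * i) * p ≠ 0 := by positivity
    rw [elasticity3, if_neg hn0, hset, csSup_pair, csInf_pair,
      sup_eq_right.mpr (by omega : 2 + i ≤ q + i), inf_eq_left.mpr (by omega : 2 + i ≤ q + i)]
    push_cast
    ring
end

section
/- For every real number M, there exists a numerical semigroup S with exactly 3 atoms whose mean Apéry elasticity MAE(S) = (1/|Ap(S)|) Σ_{n ∈ Ap(S)} ρ(n) exceeds M. -/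
namespace MAE

def A (k : ℕ) : ℕ := 4*k^2+4*k+3
def B (k : ℕ) : ℕ := 4*k^2+6*k+4
def C (k : ℕ) : ℕ := 4*k^3+8*k^2+7*k+2
def S (k : ℕ) : Set ℕ := {n | ∃ α β γ : ℕ, n = α * A k + β * B k + γ * C k}

variable {k : ℕ}

lemma A_pos : 0 < A k := by unfold A; positivity
lemma B_pos : 0 < B k := by unfold B; positivity
lemma C_pos (hk : 1 ≤ k) : 0 < C k := by unfold C; positivity
lemma hAB (hk : 1 ≤ k) : A k < B k := by unfold A B; omega
lemma hBC (hk : 1 ≤ k) : B k < C k := by unfold B C; nlinarith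
lemma hBA : B k = A k + (2*k+1) := by unfold A B; ring
lemma hCA : C k + 1 = (k+1) * A k := by unfold A C; ring
lemma hCB : 2 * C k = (2*k+1) * B k := by unfold B C; ring

lemma zero_mem : 0 ∈ S k := ⟨0, 0, 0, by ring⟩
lemma a_mem : A k ∈ S k := ⟨1, 0, 0, by ring⟩
lemma b_mem : B k ∈ S k := ⟨0, 1, 0, by ring⟩
lemma c_mem : C k ∈ S k := ⟨0, 0, 1, by ring⟩
lemma add_mem {x y : ℕ} (hx : x ∈ S k) (hy : y ∈ S k) : x + y ∈ S k := by
  obtain ⟨α, β, γ, rfl⟩ := hx; obtain ⟨α', β', γ', rfl⟩ := hy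
  exact ⟨α + α', β + β', γ + γ', by ring⟩

lemma ge_A (hk : 1 ≤ k) {x : ℕ} (hx : x ∈ S k) (hx0 : x ≠ 0) : A k ≤ x := by
  obtain ⟨α, β, γ, rfl⟩ := hx
  have h1 : A k ≤ B k := by unfold A B; omega
  have h2 : A k ≤ C k := by unfold A C; nlinarith [hk]
  rcases Nat.eq_zero_or_pos α with h | h
  · rcases Nat.eq_zero_or_pos β with h' | h'
    · rcases Nat.eq_zero_or_pos γ with h'' | h''
      · exfalso; apply hx0; simp [h, h', h'']
      · calc A k ≤ C k := h2
          _ ≤ γ * C k := Nat.le_mul_of_pos_left _ h''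
          _ ≤ _ := by omega
    · calc A k ≤ B k := h1
        _ ≤ β * B k := Nat.le_mul_of_pos_left _ h'
        _ ≤ _ := by omega
  · calc A k ≤ α * A k := Nat.le_mul_of_pos_left _ h
      _ ≤ _ := by omega

lemma coprime_AB : Nat.Coprime (A k) (B k) := by
  have h1 : B k = (2*k+1) + A k := by unfold A B; ring
  have h2 : A k = 2 + (2*k+1) * (2*k+1) := by unfold A; ring
  rw [h1, Nat.coprime_add_self_right]
  have : Nat.Coprime (2*k+1) 2 := by
    simp [Nat.coprime_two_right, Nat.odd_iff]
  rw [Nat.coprime_comm] at this ⊢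
  rw [h2]
  simpa [Nat.coprime_add_mul_left_right] using this

lemma large_mem {n : ℕ} (hn : A k * B k ≤ n) : n ∈ S k := by
  have hm : 1 < A k := by unfold A; omega
  have hn' : 1 < B k := by unfold B; omega
  have hF := frobeniusNumber_pair (coprime_AB (k := k)) hm hn'
  by_cases h : n ∈ AddSubmonoid.closure ({A k, B k} : Set ℕ)
  · rw [AddSubmonoid.mem_closure_pair] at h
    obtain ⟨x, y, h⟩ := h
    exact ⟨x, y, 0, by simpa [smul_eq_mul] using h.symm⟩
  · have := hF.2 h
    have h2 : A k + B k ≤ A k * B k := Nat.add_le_mul hm hn'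
    omega

lemma isNumSg : IsNumericalSemigroup (S k) := by
  refine ⟨zero_mem, fun a ha b hb => add_mem ha hb, ?_⟩
  apply Set.Finite.subset (Set.finite_Iio (A k * B k))
  intro n hn
  simp only [Set.mem_compl_iff] at hn
  by_contra h
  exact hn (large_mem (by simpa [Set.mem_Iio] using h))

lemma mult_eq (hk : 1 ≤ k) : mult (S k) = A k := by
  unfold mult
  apply le_antisymm
  · exact Nat.sInf_le ⟨a_mem, A_pos.ne'⟩
  · apply le_csInf ⟨A k, Set.mem_setOf.mpr ⟨a_mem, A_pos.ne'⟩⟩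
    rintro b ⟨hb, hb0⟩
    exact ge_A hk hb hb0

lemma a_atom (hk : 1 ≤ k) : A k ∈ Atoms (S k) := by
  refine ⟨a_mem, A_pos.ne', ?_⟩
  rintro ⟨x, hx, y, hy, hx0, hy0, hxy⟩
  have h1 := ge_A hk hx hx0
  have h2 := ge_A hk hy hy0
  have := A_pos (k := k)
  omega

lemma b_atom (hk : 1 ≤ k) : B k ∈ Atoms (S k) := by
  refine ⟨b_mem, B_pos.ne', ?_⟩
  rintro ⟨x, hx, y, hy, hx0, hy0, hxy⟩
  have h1 := ge_A hk hx hx0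
  have h2 := ge_A hk hy hy0
  have h3 : 2 * A k > B k := by unfold A B; nlinarith
  omega

lemma c_atom (hk : 1 ≤ k) : C k ∈ Atoms (S k) := by
  refine ⟨c_mem, (C_pos hk).ne', ?_⟩
  rintro ⟨x, hx, y, hy, hx0, hy0, hxy⟩
  obtain ⟨α₁, β₁, γ₁, rfl⟩ := hx
  obtain ⟨α₂, β₂, γ₂, rfl⟩ := hy
  have hg1 : γ₁ = 0 := by
    by_contra h
    have : C k ≤ γ₁ * C k := Nat.le_mul_of_pos_left _ (Nat.pos_of_ne_zero h)
    omega
  have hg2 : γ₂ = 0 := by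
    by_contra h
    have : C k ≤ γ₂ * C k := Nat.le_mul_of_pos_left _ (Nat.pos_of_ne_zero h)
    omega
  subst hg1; subst hg2
  have hC : C k = (α₁ + α₂) * A k + (β₁ + β₂) * B k := by
    rw [add_mul, add_mul]; omega
  set α := α₁ + α₂ with hα
  set β := β₁ + β₂ with hβ
  clear_value α β
  clear hxy
  have hβk : β ≤ k := by
    by_contra h
    push_neg at h
    have h1 : (k+1) * B k ≤ β * B k := Nat.mul_le_mul_right _ h
    have h2 : 2 * C k = (2*k+1) * B k := hCB
    have h3 : 0 < B k := B_pos
    nlinarith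
  have key : (α + β) * A k + (β * (2*k+1) + 1) = (k+1) * A k := by
    have h1 : C k + 1 = (k+1) * A k := hCA
    have h2 : B k = A k + (2*k+1) := hBA
    nlinarith [hC]
  have hle : α + β ≤ k + 1 := by
    by_contra h
    push_neg at h
    have : (k+2) * A k ≤ (α + β) * A k := Nat.mul_le_mul_right _ h
    have h4 : (k+2) * A k = (k+1) * A k + A k := by ring
    have := A_pos (k := k)
    omega
  have hsub : (k + 1 - (α + β)) * A k = β * (2*k+1) + 1 := by
    rw [Nat.sub_mul]; omega
  have hdvd : A k ∣ β * (2*k+1) + 1 := Dvd.intro_left _ hsub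
  have hlt : β * (2*k+1) + 1 < A k := by
    have : β * (2*k+1) ≤ k * (2*k+1) := Nat.mul_le_mul_right _ hβk
    unfold A; nlinarith
  have := Nat.le_of_dvd (by positivity) hdvd
  omega

lemma split_mem (hk : 1 ≤ k) (α β γ : ℕ) (h2 : 2 ≤ α + β + γ) :
    ∃ x ∈ S k, ∃ y ∈ S k, x ≠ 0 ∧ y ≠ 0 ∧ α * A k + β * B k + γ * C k = x + y := by
  have hA := A_pos (k := k); have hB := B_pos (k := k); have hC := C_pos (k := k) hk
  rcases Nat.eq_zero_or_pos α with h | h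
  · rcases Nat.eq_zero_or_pos β with h' | h'
    · obtain ⟨m, rfl⟩ : ∃ m, γ = m + 1 := ⟨γ - 1, by omega⟩
      refine ⟨C k, c_mem, α * A k + β * B k + m * C k, ⟨α, β, m, rfl⟩, (C_pos hk).ne', ?_, by ring⟩
      subst h h'
      simp only [Nat.zero_mul, Nat.zero_add, Nat.add_eq_zero]
      intro hm0
      have : m = 0 := by
        rcases Nat.mul_eq_zero.mp hm0 with h | h
        · exact h
        · omega
      omega
    · obtain ⟨m, rfl⟩ : ∃ m, β = m + 1 := ⟨β - 1, by omega⟩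
      refine ⟨B k, b_mem, α * A k + m * B k + γ * C k, ⟨α, m, γ, rfl⟩, B_pos.ne', ?_, by ring⟩
      subst h
      intro hm0
      simp only [Nat.zero_mul, Nat.zero_add, Nat.add_eq_zero, Nat.mul_eq_zero] at hm0
      omega
  · obtain ⟨m, rfl⟩ : ∃ m, α = m + 1 := ⟨α - 1, by omega⟩
    refine ⟨A k, a_mem, m * A k + β * B k + γ * C k, ⟨m, β, γ, rfl⟩, A_pos.ne', ?_, by ring⟩
    intro hm0
    simp only [Nat.add_eq_zero, Nat.mul_eq_zero] at hm0
    omega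

lemma atoms_eq (hk : 1 ≤ k) : Atoms (S k) = {A k, B k, C k} := by
  apply Set.eq_of_subset_of_subset
  · rintro x ⟨hx, hx0, hna⟩
    obtain ⟨α, β, γ, rfl⟩ := hx
    by_contra hm
    simp only [Set.mem_insert_iff, Set.mem_singleton_iff] at hm
    push_neg at hm
    obtain ⟨h1, h2, h3⟩ := hm
    rcases Nat.lt_or_ge (α + β + γ) 2 with h | h
    · have hcase : (α = 1 ∧ β = 0 ∧ γ = 0) ∨ (α = 0 ∧ β = 1 ∧ γ = 0) ∨
        (α = 0 ∧ β = 0 ∧ γ = 1) ∨ (α = 0 ∧ β = 0 ∧ γ = 0) := by omega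
      rcases hcase with ⟨rfl, rfl, rfl⟩ | ⟨rfl, rfl, rfl⟩ | ⟨rfl, rfl, rfl⟩ | ⟨rfl, rfl, rfl⟩ <;>
        simp_all
    · exact hna (split_mem hk α β γ h)
  · rintro x (rfl | rfl | rfl)
    exacts [a_atom hk, b_atom hk, c_atom hk]

lemma atoms_card (hk : 1 ≤ k) : (Atoms (S k)).ncard = 3 := by
  rw [atoms_eq hk, Set.ncard_eq_three]
  exact ⟨A k, B k, C k, (hAB hk).ne, ((hAB hk).trans (hBC hk)).ne, (hBC hk).ne, rfl⟩

set_option maxHeartbeats 1000000 in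
/-- Key lemma: for r ≤ (k+1)(2k+1), any representation of r*B must avoid the generator A. -/
lemma keyA (hk : 1 ≤ k) (r α β γ : ℕ) (hr : r ≤ (k+1)*(2*k+1))
    (h : r * B k = α * A k + β * B k + γ * C k) : α = 0 := by
  by_contra hα0
  have hα : 1 ≤ α := Nat.one_le_iff_ne_zero.mpr hα0
  have hA := A_pos (k := k); have hB := B_pos (k := k); have hCp := C_pos (k := k) hk
  -- β < r
  have hβ : β < r := by
    by_contra hcon
    push_neg at hcon
    have h1 : r * B k ≤ β * B k := Nat.mul_le_mul_right _ hcon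
    have h2 : A k ≤ α * A k := Nat.le_mul_of_pos_left _ hα
    omega
  set d := r - β with hd
  have hd1 : 1 ≤ d := by omega
  have hdr : d ≤ (k+1)*(2*k+1) := by omega
  have h2 : α * A k + γ * C k = d * B k := by
    have : d * B k + β * B k = r * B k := by
      rw [hd, Nat.sub_mul, Nat.sub_add_cancel (Nat.mul_le_mul_right _ hβ.le)]
    omega
  -- γ ≤ 2k+1
  have hγ : γ ≤ 2*k+1 := by
    by_contra hcon
    push_neg at hcon
    have h1 : (2*k+2) * C k ≤ γ * C k := Nat.mul_le_mul_right _ hcon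
    have h3 : d * B k ≤ ((k+1)*(2*k+1)) * B k := Nat.mul_le_mul_right _ hdr
    have h4 : ((k+1)*(2*k+1)) * B k = (k+1) * (2 * C k) := by rw [hCB]; ring
    have h5 : A k ≤ α * A k := Nat.le_mul_of_pos_left _ hα
    nlinarith
  -- move to ℤ
  have hzB : (B k : ℤ) = A k + (2*k+1) := by
    have := hBA (k := k); exact_mod_cast congrArg (Nat.cast (R := ℤ)) this
  have hzC : (C k : ℤ) = (k+1) * A k - 1 := by
    have := hCA (k := k)
    have : ((C k : ℤ) + 1) = (k+1) * A k := by exact_mod_cast congrArg (Nat.cast (R := ℤ)) this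
    linarith
  have hz2 : (α : ℤ) * A k + γ * C k = d * B k := by exact_mod_cast h2
  set s := d / (2*k+1) with hs
  set u := d % (2*k+1) with hu
  have hdu : (2*k+1) * s + u = d := Nat.div_add_mod d (2*k+1)
  have hu2k : u ≤ 2*k := by
    have : u < 2*k+1 := Nat.mod_lt _ (by omega)
    omega
  have hsk : s ≤ k + 1 := by
    rw [hs]
    calc d / (2*k+1) ≤ ((k+1)*(2*k+1)) / (2*k+1) := Nat.div_le_div_right hdr
      _ = k+1 := Nat.mul_div_cancel _ (by omega)
  clear_value s u
  -- m := α + γ(k+1) - d  over ℤ ;  m * A = d(2k+1) + γ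
  set m : ℤ := (α : ℤ) + γ * (k+1) - d with hm
  clear_value m
  have hmA : m * A k = d * (2*k+1) + γ := by
    linear_combination (A k : ℤ) * hm + hz2 - (γ:ℤ) * hzC + (d:ℤ) * hzB
  -- (m - s) * A = u(2k+1) + γ - 2s
  have hzA : (A k : ℤ) = (2*k+1)^2 + 2 := by unfold A; push_cast; ring
  have hzdu : ((2*k+1) : ℤ) * s + u = d := by exact_mod_cast hdu
  have hE : (m - s) * A k = (u * (2*k+1) + γ - 2*s : ℤ) := by
    linear_combination hmA - (s : ℤ) * hzA - ((2*k+1) : ℤ) * hzdu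
  -- bound the RHS strictly between -A and A
  have hEub : (u * (2*k+1) + γ - 2*s : ℤ) < A k := by
    rw [hzA]
    have h1 : (u : ℤ) ≤ 2*k := by exact_mod_cast hu2k
    have h2 : (γ : ℤ) ≤ 2*k+1 := by exact_mod_cast hγ
    nlinarith
  have hElb : -(A k : ℤ) < (u * (2*k+1) + γ - 2*s : ℤ) := by
    rw [hzA]
    have h1 : (s : ℤ) ≤ k+1 := by exact_mod_cast hsk
    nlinarith [Int.natCast_nonneg u, Int.natCast_nonneg γ]
  -- hence m = s and u(2k+1) + γ = 2s
  have hms : m = s := by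
    rcases lt_trichotomy m (s : ℤ) with hlt | heq | hgt
    · have h1 : m - s ≤ -1 := by omega
      have : (m - s) * A k ≤ -1 * A k := by
        apply mul_le_mul_of_nonneg_right h1
        positivity
      rw [hE] at this
      omega
    · exact heq
    · have h1 : 1 ≤ m - s := by omega
      have : 1 * (A k : ℤ) ≤ (m - s) * A k := by
        apply mul_le_mul_of_nonneg_right h1
        positivity
      rw [hE] at this
      omega
  have hE0 : (u : ℤ) * (2*k+1) + γ = 2*s := by
    have h' : (0:ℤ) = u * (2*k+1) + γ - 2*s := by rw [← hE, hms]; ring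
    linarith
  -- case u ≥ 1 : impossible
  rcases Nat.eq_zero_or_pos u with hu0 | hu0
  · -- u = 0 : γ = 2s, d = (2k+1)s, then α * A = 0, contradiction
    have hγ2s : (γ : ℤ) = 2 * s := by rw [hu0] at hE0; push_cast at hE0; omega
    have hγ2s' : γ = 2 * s := by exact_mod_cast hγ2s
    have hd' : d = (2*k+1) * s := by omega
    have hzCB : (2 : ℤ) * C k = (2*k+1) * B k := by exact_mod_cast hCB (k := k)
    have : (α : ℤ) * A k = 0 := by
      have hzd : (d : ℤ) = (2*k+1) * s := by exact_mod_cast hd'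
      linear_combination hz2 - (C k : ℤ) * hγ2s + (B k : ℤ) * hzd - (s : ℤ) * hzCB
    have : (α : ℤ) = 0 := by
      rcases mul_eq_zero.mp this with h | h
      · exact h
      · exfalso; have : (0:ℤ) < A k := by exact_mod_cast hA
        omega
    exact hα0 (by exact_mod_cast this)
  · -- u ≥ 1: u(2k+1) ≥ 2k+1 forces s = k+1, then d too large
    have hE0' : u * (2*k+1) + γ = 2 * s := by exact_mod_cast hE0
    have h1 : 2*k+1 ≤ u * (2*k+1) := Nat.le_mul_of_pos_left _ hu0
    have hs1 : s = k + 1 := by omega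
    have hd' : d = (2*k+1)*(k+1) + u := by rw [← hdu, hs1]
    nlinarith [hdr, hu0, hd']

lemma rb_mem_apery (hk : 1 ≤ k) (r : ℕ) (hr : r ≤ (k+1)*(2*k+1)) :
    r * B k ∈ Apery (S k) (A k) := by
  constructor
  · exact ⟨0, r, 0, by ring⟩
  · rintro ⟨y, hy, hEq⟩
    obtain ⟨α, β, γ, rfl⟩ := hy
    have h : r * B k = (α + 1) * A k + β * B k + γ * C k := by
      rw [add_mul, one_mul]; omega
    have := keyA hk r (α+1) β γ hr h
    omega

lemma mem_add_multiple {x : ℕ} (hx : x ∈ S k) (m : ℕ) : x + m * A k ∈ S k := by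
  induction m with
  | zero => simpa using hx
  | succ n ih =>
      have : x + (n+1) * A k = (x + n * A k) + A k := by ring
      rw [this]
      exact add_mem ih a_mem

lemma apery_lt_aux {x y : ℕ} (hx : x ∈ Apery (S k) (A k)) (hy : y ∈ Apery (S k) (A k))
    (hxy : x % A k = y % A k) (hlt : x < y) : False := by
  have hdvd : A k ∣ y - x := (Nat.modEq_iff_dvd' hlt.le).mp hxy
  obtain ⟨c, hc⟩ := hdvd
  obtain ⟨m, rfl⟩ : ∃ m, c = m + 1 := by
    refine ⟨c - 1, ?_⟩
    rcases Nat.eq_zero_or_pos c with h0 | h0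
    · exfalso; rw [h0, Nat.mul_zero] at hc; omega
    · omega
  have h2 : A k * (m+1) = m * A k + A k := by ring
  exact hy.2 ⟨x + m * A k, mem_add_multiple hx.1 m, by omega⟩

lemma apery_injOn : Set.InjOn (· % A k) (Apery (S k) (A k)) := by
  intro x hx y hy hxy
  rcases Nat.lt_trichotomy x y with h | h | h
  · exact absurd (apery_lt_aux hx hy hxy h) not_false
  · exact h
  · exact absurd (apery_lt_aux hy hx hxy.symm h) not_false

lemma apery_finite : (Apery (S k) (A k)).Finite := by
  apply Set.Finite.of_finite_image _ apery_injOn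
  apply Set.Finite.subset (Set.finite_Iio (A k))
  rintro x ⟨y, hy, rfl⟩
  exact Nat.mod_lt _ A_pos

lemma apery_ncard_le : (Apery (S k) (A k)).ncard ≤ A k := by
  rw [← Set.ncard_image_of_injOn apery_injOn]
  have hsub : (· % A k) '' (Apery (S k) (A k)) ⊆ Set.Iio (A k) := by
    rintro x ⟨y, hy, rfl⟩
    exact Nat.mod_lt _ A_pos
  have hIio : (Set.Iio (A k)).ncard = A k := by
    have := Set.Nat.encard_range (A k)
    have heq : Set.Iio (A k) = {i | i < A k} := rfl
    rw [Set.ncard_def, heq, this]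
    simp
  calc ((· % A k) '' (Apery (S k) (A k))).ncard ≤ (Set.Iio (A k)).ncard :=
        Set.ncard_le_ncard hsub (Set.finite_Iio _)
    _ = A k := hIio

lemma factlen_le {T : Set ℕ} (hT : ∀ x ∈ T, x ≠ 0) {n L : ℕ} (hL : L ∈ FactLens T n) : L ≤ n := by
  obtain ⟨c, hsupp, hsum, hlen⟩ := hL
  rw [← hlen, ← hsum]
  unfold Finsupp.sum
  apply Finset.sum_le_sum
  intro x hx
  have hx0 : x ≠ 0 := hT x (hsupp hx)
  exact Nat.le_mul_of_pos_right _ (Nat.pos_of_ne_zero hx0)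

lemma factlen_zero {T : Set ℕ} {n : ℕ} (h : 0 ∈ FactLens T n) : n = 0 := by
  obtain ⟨c, hsupp, hsum, hlen⟩ := h
  have hz : ∀ x ∈ c.support, c x = 0 := by
    intro x hx
    exact (Finset.sum_eq_zero_iff.mp hlen) x hx
  rw [← hsum]
  unfold Finsupp.sum
  apply Finset.sum_eq_zero
  intro x hx
  simp [hz x hx]

lemma long_mem (hk : 1 ≤ k) (r : ℕ) : r ∈ FactLens (Atoms (S k)) (r * B k) := by
  refine ⟨Finsupp.single (B k) r, ?_, ?_, ?_⟩
  · intro x hx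
    have := Finsupp.support_single_subset (Finset.mem_coe.mp hx)
    simp only [Finset.mem_singleton] at this
    rw [this]
    exact b_atom hk
  · rw [Finsupp.sum_single_index (by simp)]
  · rw [Finsupp.sum_single_index rfl]

lemma short_mem (hk : 1 ≤ k) (r : ℕ) :
    (r % (2*k+1) + 2 * (r / (2*k+1))) ∈ FactLens (Atoms (S k)) (r * B k) := by
  set t := r / (2*k+1) with ht
  set u := r % (2*k+1) with hu
  have hdu : (2*k+1) * t + u = r := Nat.div_add_mod r (2*k+1)
  refine ⟨Finsupp.single (B k) u + Finsupp.single (C k) (2*t), ?_, ?_, ?_⟩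
  · intro x hx
    have h1 := Finsupp.support_add (Finset.mem_coe.mp hx)
    simp only [Finset.mem_union] at h1
    rcases h1 with h | h
    · have := Finsupp.support_single_subset h
      simp only [Finset.mem_singleton] at this
      rw [this]; exact b_atom hk
    · have := Finsupp.support_single_subset h
      simp only [Finset.mem_singleton] at this
      rw [this]; exact c_atom hk
  · rw [Finsupp.sum_add_index' (by intro a; simp) (by intro a b₁ b₂; ring)]
    rw [Finsupp.sum_single_index (by simp), Finsupp.sum_single_index (by simp)]
    calc u * B k + 2*t * C k = u * B k + t * (2 * C k) := by ring
      _ = u * B k + t * ((2*k+1) * B k) := by rw [hCB]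
      _ = ((2*k+1) * t + u) * B k := by ring
      _ = r * B k := by rw [hdu]
  · rw [Finsupp.sum_add_index' (fun a => rfl) (fun a b₁ b₂ => rfl),
      Finsupp.sum_single_index rfl, Finsupp.sum_single_index rfl]

lemma elas_nonneg {T : Set ℕ} (n : ℕ) : 0 ≤ elasticity T n := by
  unfold elasticity
  split
  · norm_num
  · positivity

lemma elas_ge {T : Set ℕ} (hT : ∀ x ∈ T, x ≠ 0) {n L₁ L₂ : ℕ} (h1 : L₁ ∈ FactLens T n)
    (h2 : L₂ ∈ FactLens T n) (hn : n ≠ 0) :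
    (L₁ : ℚ) / L₂ ≤ elasticity T n := by
  have hbdd : BddAbove (FactLens T n) := ⟨n, fun L hL => factlen_le hT hL⟩
  have hsup : L₁ ≤ sSup (FactLens T n) := le_csSup hbdd h1
  have hinf_le : sInf (FactLens T n) ≤ L₂ := Nat.sInf_le h2
  have hinf_pos : 0 < sInf (FactLens T n) := by
    rcases Nat.eq_zero_or_pos (sInf (FactLens T n)) with h0 | h0
    · exfalso
      have hmem : sInf (FactLens T n) ∈ FactLens T n := Nat.sInf_mem ⟨L₁, h1⟩
      rw [h0] at hmem
      exact hn (factlen_zero hmem)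
    · exact h0
  rw [elasticity, if_neg hn]
  rcases Nat.eq_zero_or_pos L₂ with hL2 | hL2
  · -- L₂ = 0 then n = 0, contradiction
    exfalso; exact hn (factlen_zero (hL2 ▸ h2))
  · apply div_le_div₀ (by positivity) (by exact_mod_cast hsup) (by exact_mod_cast hinf_pos)
      (by exact_mod_cast hinf_le)

lemma elas_rb (hk : 1 ≤ k) (r : ℕ) (h1 : 1 ≤ r) (hr : r ≤ (k+1)*(2*k+1)) :
    (r : ℚ) / (2*(2*k+1)) ≤ elasticity (Atoms (S k)) (r * B k) := by
  have hT : ∀ x ∈ Atoms (S k), x ≠ 0 := fun x hx => hx.2.1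
  have hn : r * B k ≠ 0 := by
    have := B_pos (k := k); positivity
  set t := r / (2*k+1) with ht
  set u := r % (2*k+1) with hu
  have hdu : (2*k+1) * t + u = r := Nat.div_add_mod r (2*k+1)
  have h2 : u < 2*k+1 := Nat.mod_lt _ (by omega)
  have h3 : t ≤ k+1 := by
    rw [ht]
    calc r / (2*k+1) ≤ ((k+1)*(2*k+1)) / (2*k+1) := Nat.div_le_div_right hr
      _ = k+1 := Nat.mul_div_cancel _ (by omega)
  clear_value t u
  have hL2 : u + 2*t ≤ 2*(2*k+1) := by omega
  have hpos : 0 < u + 2*t := by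
    rcases Nat.eq_zero_or_pos t with h0 | h0
    · rw [h0] at hdu; omega
    · omega
  calc (r : ℚ) / (2*(2*k+1)) ≤ (r : ℚ) / (u + 2*t) := by
        apply div_le_div_of_nonneg_left (by positivity) ?_ ?_
        · exact_mod_cast hpos
        · exact_mod_cast hL2
    _ ≤ elasticity (Atoms (S k)) (r * B k) := by
        have h5 := elas_ge hT (long_mem hk r) (short_mem hk r) hn
        rw [← ht, ← hu] at h5
        exact_mod_cast h5

lemma zero_mem_apery : 0 ∈ Apery (S k) (A k) := by
  refine ⟨zero_mem, ?_⟩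
  rintro ⟨y, hy, h⟩
  have := A_pos (k := k)
  omega

lemma sum_lb (hk : 1 ≤ k) :
    ((k:ℚ)+1)/16 * (Apery (S k) (A k)).ncard ≤
      ∑ᶠ n ∈ Apery (S k) (A k), elasticity (Atoms (S k)) n := by
  classical
  set N := (k+1)*(2*k+1) with hN
  set F := (apery_finite (k := k)).toFinset with hF
  set R := (Finset.Icc 1 N).image (· * B k) with hR
  have hfin : ∑ᶠ n ∈ Apery (S k) (A k), elasticity (Atoms (S k)) n =
      ∑ n ∈ F, elasticity (Atoms (S k)) n := by
    rw [← Set.Finite.coe_toFinset (apery_finite (k := k)), finsum_mem_coe_finset]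
  have hsub : R ⊆ F := by
    intro x hx
    rw [hR, Finset.mem_image] at hx
    obtain ⟨r, hr, rfl⟩ := hx
    rw [Finset.mem_Icc] at hr
    rw [hF, Set.Finite.mem_toFinset]
    exact rb_mem_apery hk r hr.2
  have h1 : ∑ n ∈ R, elasticity (Atoms (S k)) n ≤ ∑ n ∈ F, elasticity (Atoms (S k)) n :=
    Finset.sum_le_sum_of_subset_of_nonneg hsub (fun i _ _ => elas_nonneg i)
  have h2 : ∑ n ∈ R, elasticity (Atoms (S k)) n =
      ∑ r ∈ Finset.Icc 1 N, elasticity (Atoms (S k)) (r * B k) := by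
    rw [hR]
    apply Finset.sum_image
    intro x _ y _ h
    exact Nat.eq_of_mul_eq_mul_right B_pos h
  have h3 : ∑ r ∈ Finset.Icc 1 N, (r:ℚ)/(2*(2*k+1)) ≤
      ∑ r ∈ Finset.Icc 1 N, elasticity (Atoms (S k)) (r * B k) := by
    apply Finset.sum_le_sum
    intro r hr
    rw [Finset.mem_Icc] at hr
    exact elas_rb hk r hr.1 hr.2
  -- Gauss sum
  have hgauss : (∑ r ∈ Finset.range (N+1), r) * 2 = (N+1) * N := by
    simpa using Finset.sum_range_id_mul_two (N+1)
  have hIcc : ∑ r ∈ Finset.Icc 1 N, r = ∑ r ∈ Finset.range (N+1), r := by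
    rw [Finset.range_eq_Ico, ← Finset.Ico_add_one_right_eq_Icc]
    rw [Finset.sum_eq_sum_Ico_succ_bot (by omega : 0 < N+1)]
    simp [Nat.succ_eq_add_one]
  have hsumQ : ∑ r ∈ Finset.Icc 1 N, (r:ℚ) = (N:ℚ) * (N+1) / 2 := by
    have hcast : ((∑ r ∈ Finset.Icc 1 N, r : ℕ) : ℚ) = ∑ r ∈ Finset.Icc 1 N, (r:ℚ) := by
      push_cast; rfl
    have h5 : ((∑ r ∈ Finset.Icc 1 N, r : ℕ) : ℚ) * 2 = ((N:ℚ)+1) * N := by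
      rw [hIcc]; exact_mod_cast hgauss
    rw [← hcast]; linarith
  have h4 : ∑ r ∈ Finset.Icc 1 N, (r:ℚ)/(2*(2*k+1)) = ((N:ℚ) * (N+1) / 2) / (2*(2*k+1)) := by
    rw [← Finset.sum_div, hsumQ]
  -- numeric comparison
  have hncard : ((Apery (S k) (A k)).ncard : ℚ) ≤ (A k : ℚ) := by
    exact_mod_cast apery_ncard_le (k := k)
  have hnn : (0:ℚ) ≤ ((k:ℚ)+1)/16 := by positivity
  have hstep : ((k:ℚ)+1)/16 * (Apery (S k) (A k)).ncard ≤ ((k:ℚ)+1)/16 * (A k : ℚ) :=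
    mul_le_mul_of_nonneg_left hncard hnn
  have hpoly : ((k:ℚ)+1)/16 * (A k : ℚ) ≤ ((N:ℚ) * (N+1) / 2) / (2*(2*k+1)) := by
    have hNQ : (N:ℚ) = ((k:ℚ)+1) * (2*(k:ℚ)+1) := by rw [hN]; push_cast; ring
    have hAQ : (A k : ℚ) = 4*(k:ℚ)^2 + 4*(k:ℚ) + 3 := by unfold A; push_cast; ring
    rw [hNQ, hAQ]
    rw [div_mul_eq_mul_div, div_le_div_iff₀ (by norm_num) (by positivity)]
    nlinarith [sq_nonneg ((k:ℚ)), sq_nonneg ((k:ℚ)+1), Nat.cast_nonneg (α := ℚ) k]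
  calc ((k:ℚ)+1)/16 * (Apery (S k) (A k)).ncard
      ≤ ((k:ℚ)+1)/16 * (A k : ℚ) := hstep
    _ ≤ ((N:ℚ) * (N+1) / 2) / (2*(2*k+1)) := hpoly
    _ = ∑ r ∈ Finset.Icc 1 N, (r:ℚ)/(2*(2*k+1)) := h4.symm
    _ ≤ ∑ r ∈ Finset.Icc 1 N, elasticity (Atoms (S k)) (r * B k) := h3
    _ = ∑ n ∈ R, elasticity (Atoms (S k)) n := h2.symm
    _ ≤ ∑ n ∈ F, elasticity (Atoms (S k)) n := h1
    _ = _ := hfin.symm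

end MAE

theorem mean_apery_elasticity_unbounded (M : ℝ) :
    ∃ S : Set ℕ, IsNumericalSemigroup S ∧ (Atoms S).ncard = 3 ∧
      M < (((∑ᶠ n ∈ Apery S (mult S), elasticity (Atoms S) n) /
        ((Apery S (mult S)).ncard : ℚ) : ℚ) : ℝ) := by
  set k := 16 * (⌈M⌉₊ + 1) with hkdef
  have hk : 1 ≤ k := by omega
  refine ⟨MAE.S k, MAE.isNumSg, MAE.atoms_card hk, ?_⟩
  rw [MAE.mult_eq hk]
  have hpos : 0 < (Apery (MAE.S k) (MAE.A k)).ncard :=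
    (Set.ncard_pos MAE.apery_finite).mpr ⟨0, MAE.zero_mem_apery⟩
  have hsum := MAE.sum_lb hk
  have hq : ((k:ℚ)+1)/16 ≤ (∑ᶠ n ∈ Apery (MAE.S k) (MAE.A k), elasticity (Atoms (MAE.S k)) n) /
      ((Apery (MAE.S k) (MAE.A k)).ncard : ℚ) := by
    rw [le_div_iff₀ (by exact_mod_cast hpos)]
    exact hsum
  have hcast : ((((k:ℚ)+1)/16 : ℚ) : ℝ) ≤
      (((∑ᶠ n ∈ Apery (MAE.S k) (MAE.A k), elasticity (Atoms (MAE.S k)) n) /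
        ((Apery (MAE.S k) (MAE.A k)).ncard : ℚ) : ℚ) : ℝ) := by
    exact_mod_cast hq
  have hM : M < ((((k:ℚ)+1)/16 : ℚ) : ℝ) := by
    have h1 : M ≤ (⌈M⌉₊ : ℝ) := Nat.le_ceil M
    rw [hkdef]
    push_cast
    linarith
  linarith
end

section
/- For each n ≥ 2, the Apéry poset of S = ⟨n², n² + n, 2n² + 1⟩ contains an antichain of size n; in particular the width of an Apéry poset of a numerical semigroup with 3 atoms can be arbitrarily large. -/
lemma lemA (n k : ℕ) (hn : 2 ≤ n) (hk : 1 ≤ k) (hkn : k < n) :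
    ¬ ∃ a b c : ℕ, k * (n ^ 2 - n + 1) = a * n ^ 2 + b * (n ^ 2 + n) + c * (2 * n ^ 2 + 1) := by
  rintro ⟨a, b, c, h⟩
  have hnn : n ≤ n ^ 2 := Nat.le_self_pow (by norm_num) n
  have h2 : k * (n ^ 2 + 1) = a * n ^ 2 + b * (n ^ 2 + n) + c * (2 * n ^ 2 + 1) + k * n := by
    have hs : n ^ 2 - n + 1 + n = n ^ 2 + 1 := by omega
    calc k * (n ^ 2 + 1) = k * (n ^ 2 - n + 1) + k * n := by rw [← hs]; ring
    _ = _ := by rw [h]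
  have hz : (k : ℤ) * ((n:ℤ) ^ 2 + 1) = a * (n:ℤ) ^ 2 + b * ((n:ℤ) ^ 2 + n) + c * (2 * (n:ℤ) ^ 2 + 1) + k * n := by
    exact_mod_cast h2
  have hn2 : (2 : ℤ) ≤ (n : ℤ) := by exact_mod_cast hn
  have hck : c < k := by
    by_contra hc
    push_neg at hc
    have hc' : (k : ℤ) ≤ (c : ℤ) := by exact_mod_cast hc
    nlinarith [sq_nonneg ((n:ℤ)), (by positivity : (0:ℤ) ≤ (a:ℤ) * (n:ℤ)^2),
      (by positivity : (0:ℤ) ≤ (b:ℤ) * ((n:ℤ)^2 + (n:ℤ))),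
      (by exact_mod_cast hk : (1:ℤ) ≤ (k:ℤ)),
      mul_le_mul_of_nonneg_right hc' (by positivity : (0:ℤ) ≤ 2 * (n:ℤ)^2 + 1)]
  have hd : (n : ℤ) ∣ ((k : ℤ) - c) :=
    ⟨((a : ℤ) + b + 2 * c - k) * n + b + k, by linear_combination hz⟩
  have habs : |((k : ℤ) - c)| < n := by
    rw [abs_lt]; constructor <;> push_cast <;> omega
  have := Int.eq_zero_of_abs_lt_dvd hd habs
  omega

lemma lemB (n a b : ℕ) (hn : 2 ≤ n) (hab : a + b + 1 = n) :
    ¬ ∃ a' b' c' : ℕ, a * (n ^ 2 + n) + b * (2 * n ^ 2 + 1)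
      = a' * n ^ 2 + b' * (n ^ 2 + n) + c' * (2 * n ^ 2 + 1) + n ^ 2 := by
  rintro ⟨a', b', c', h⟩
  have hz : (a:ℤ) * ((n:ℤ)^2 + n) + b * (2 * (n:ℤ)^2 + 1)
      = a' * (n:ℤ)^2 + b' * ((n:ℤ)^2 + n) + c' * (2 * (n:ℤ)^2 + 1) + (n:ℤ)^2 := by
    exact_mod_cast h
  have hn2 : (2 : ℤ) ≤ (n : ℤ) := by exact_mod_cast hn
  have haz : (a:ℤ) + b + 1 = n := by exact_mod_cast hab
  -- c' < n
  have hcn : c' < n := by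
    by_contra hc
    push_neg at hc
    have hc' : (n : ℤ) ≤ (c' : ℤ) := by exact_mod_cast hc
    nlinarith [(by positivity : (0:ℤ) ≤ (a':ℤ) * (n:ℤ)^2),
      (by positivity : (0:ℤ) ≤ (b':ℤ) * ((n:ℤ)^2 + (n:ℤ))),
      mul_le_mul_of_nonneg_right hc' (by positivity : (0:ℤ) ≤ 2 * (n:ℤ)^2 + 1),
      (by positivity : (0:ℤ) ≤ (a:ℤ) * (n:ℤ)), (by exact_mod_cast Nat.zero_le a : (0:ℤ) ≤ (a:ℤ)),
      (by exact_mod_cast Nat.zero_le b : (0:ℤ) ≤ (b:ℤ))]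
  have hd : (n : ℤ) ∣ ((b : ℤ) - c') :=
    ⟨((a':ℤ) + b' + 2 * c' + 1 - a - 2 * b) * n + b' - a, by linear_combination hz⟩
  have habs : |((b : ℤ) - c')| < n := by
    rw [abs_lt]; constructor <;> push_cast <;> omega
  have hbc : c' = b := by have := Int.eq_zero_of_abs_lt_dvd hd habs; omega
  subst hbc
  -- now derive b' = a
  have hz2 : (a:ℤ) * ((n:ℤ)^2 + n) = a' * (n:ℤ)^2 + b' * ((n:ℤ)^2 + n) + (n:ℤ)^2 := by
    linarith [hz]
  have hbn : b' < n := by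
    by_contra hb
    push_neg at hb
    have hb' : (n : ℤ) ≤ (b' : ℤ) := by exact_mod_cast hb
    nlinarith [(by positivity : (0:ℤ) ≤ (a':ℤ) * (n:ℤ)^2),
      mul_le_mul_of_nonneg_right hb' (by positivity : (0:ℤ) ≤ (n:ℤ)^2 + (n:ℤ))]
  have hmul : ((a:ℤ) - b') * n = (n * ((a':ℤ) + b' + 1 - a)) * n := by
    linear_combination hz2
  have hd2 : (n : ℤ) ∣ ((a : ℤ) - b') :=
    ⟨(a':ℤ) + b' + 1 - a, mul_right_cancel₀ (by positivity) hmul⟩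
  have habs2 : |((a : ℤ) - b')| < n := by
    rw [abs_lt]; constructor <;> push_cast <;> omega
  have hba : b' = a := by have := Int.eq_zero_of_abs_lt_dvd hd2 habs2; omega
  subst hba
  have hpos : (0:ℤ) < (n:ℤ)^2 := by positivity
  nlinarith [(by positivity : (0:ℤ) ≤ (a':ℤ) * (n:ℤ)^2)]

lemma wdiff (n a₁ a₂ : ℕ) (h : a₁ ≤ a₂) (h2 : a₂ ≤ n - 1) (hn : 2 ≤ n) :
    a₁ * (n ^ 2 + n) + (n - 1 - a₁) * (2 * n ^ 2 + 1)
      = a₂ * (n ^ 2 + n) + (n - 1 - a₂) * (2 * n ^ 2 + 1) + (a₂ - a₁) * (n ^ 2 - n + 1) := by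
  have hnn : n ≤ n ^ 2 := Nat.le_self_pow (by norm_num) n
  obtain ⟨d, hd⟩ : ∃ d, a₂ = a₁ + d := ⟨a₂ - a₁, by omega⟩
  obtain ⟨e, he⟩ : ∃ e, n - 1 = a₂ + e := ⟨n - 1 - a₂, by omega⟩
  obtain ⟨p, hp⟩ : ∃ p, n ^ 2 = p + n := ⟨n ^ 2 - n, by omega⟩
  subst hd
  have h1 : n - 1 - a₁ = d + e := by omega
  have h2' : n - 1 - (a₁ + d) = e := by omega
  have h3 : a₁ + d - a₁ = d := by omega
  have h4 : n ^ 2 - n + 1 = p + 1 := by omega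
  rw [h1, h2', h3, h4, hp]
  ring

theorem apery_poset_large_antichain (n : ℕ) (hn : 2 ≤ n) :
    ∃ A : Finset ℕ,
      (↑A : Set ℕ) ⊆ Apery (Gen3 (n ^ 2) (n ^ 2 + n) (2 * n ^ 2 + 1)) (n ^ 2) ∧
      A.card = n ∧
      ∀ x ∈ A, ∀ y ∈ A, x ≠ y →
        ¬∃ s ∈ Gen3 (n ^ 2) (n ^ 2 + n) (2 * n ^ 2 + 1), y = x + s := by
  set f : ℕ → ℕ := fun a => a * (n ^ 2 + n) + (n - 1 - a) * (2 * n ^ 2 + 1) with hf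
  have hnn : n ≤ n ^ 2 := Nat.le_self_pow (by norm_num) n
  have key : ∀ a₁ a₂, a₁ < a₂ → a₂ ≤ n - 1 →
      f a₂ + (a₂ - a₁) * (n ^ 2 - n + 1) = f a₁ := by
    intro a₁ a₂ h1 h2
    exact (wdiff n a₁ a₂ h1.le h2 hn).symm
  refine ⟨(Finset.range n).image f, ?_, ?_, ?_⟩
  · intro x hx
    simp only [Finset.coe_image, Set.mem_image, Finset.coe_range, Set.mem_Iio] at hx
    obtain ⟨a, ha, rfl⟩ := hx
    constructor
    · exact ⟨0, a, n - 1 - a, by ring⟩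
    · rintro ⟨y, ⟨a', b', c', rfl⟩, hy⟩
      exact lemB n a (n - 1 - a) hn (by omega) ⟨a', b', c', by simpa [hf] using hy⟩
  · rw [Finset.card_image_of_injOn, Finset.card_range]
    intro a₁ h1 a₂ h2 heq
    simp only [Finset.coe_range, Set.mem_Iio] at h1 h2
    by_contra hne
    rcases Nat.lt_or_ge a₁ a₂ with h | h
    · have := key a₁ a₂ h (by omega)
      have hpos : 1 ≤ (a₂ - a₁) * (n ^ 2 - n + 1) := by
        apply Nat.one_le_iff_ne_zero.2
        simp only [Ne, Nat.mul_eq_zero]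
        omega
      omega
    · have hlt : a₂ < a₁ := by omega
      have := key a₂ a₁ hlt (by omega)
      have hpos : 1 ≤ (a₁ - a₂) * (n ^ 2 - n + 1) := by
        apply Nat.one_le_iff_ne_zero.2
        simp only [Ne, Nat.mul_eq_zero]
        omega
      omega
  · intro x hx y hy hxy
    simp only [Finset.mem_image, Finset.mem_range] at hx hy
    obtain ⟨a₁, h1, rfl⟩ := hx
    obtain ⟨a₂, h2, rfl⟩ := hy
    rintro ⟨s, hs, heq⟩
    rcases Nat.lt_trichotomy a₁ a₂ with h | h | h
    · -- f a₂ + diff = f a₁, but f a₂ = f a₁ + s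
      have := key a₁ a₂ h (by omega)
      have hpos : 1 ≤ (a₂ - a₁) * (n ^ 2 - n + 1) := by
        apply Nat.one_le_iff_ne_zero.2
        simp only [Ne, Nat.mul_eq_zero]
        omega
      omega
    · exact hxy (by rw [h])
    · have hkey := key a₂ a₁ h (by omega)
      have hs' : s = (a₁ - a₂) * (n ^ 2 - n + 1) := by omega
      obtain ⟨a, b, c, hsg⟩ := hs
      exact lemA n (a₁ - a₂) hn (by omega) (by omega) ⟨a, b, c, by rw [← hs', hsg]⟩
end
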